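/- arXiv:2009.05270 — 3 statements merged into one kernel-verified Lean document; each statement's English description precedes it below -/
import Mathlib

section
/- Let F be a field, q ∈ F and f, g ∈ F[h]. Then the Gelfand–Kirillov dimension of the quantum generalized Heisenberg algebra H_q(f,g) equals 3 if and only if deg f ≤ 1, and if deg f > 1 then GKdim H_q(f,g) ≥ 4. -/
open Polynomial

/-- The three generators `x`, `y`, `h` of a quantum generalized Heisenberg algebra. -/
inductive QGHAGen : Type
  | x : QGHAGen
  | y : QGHAGen
  | h : QGHAGen

/-- The defining relations of the quantum generalized Heisenberg algebra `H_q(f,g)`: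
`h*x = x*f(h)`, `y*h = f(h)*y`, and `y*x - q*(x*y) = g(h)`. -/
inductive QGHARel (F : Type*) [Field F] (q : F) (f g : F[X]) :
    FreeAlgebra F QGHAGen → FreeAlgebra F QGHAGen → Prop
  | hx : QGHARel F q f g
      (FreeAlgebra.ι F QGHAGen.h * FreeAlgebra.ι F QGHAGen.x)
      (FreeAlgebra.ι F QGHAGen.x * aeval (FreeAlgebra.ι F QGHAGen.h) f)
  | yh : QGHARel F q f g
      (FreeAlgebra.ι F QGHAGen.y * FreeAlgebra.ι F QGHAGen.h)
      (aeval (FreeAlgebra.ι F QGHAGen.h) f * FreeAlgebra.ι F QGHAGen.y)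
  | yx : QGHARel F q f g
      (FreeAlgebra.ι F QGHAGen.y * FreeAlgebra.ι F QGHAGen.x)
      (q • (FreeAlgebra.ι F QGHAGen.x * FreeAlgebra.ι F QGHAGen.y)
        + aeval (FreeAlgebra.ι F QGHAGen.h) g)

/-- The quantum generalized Heisenberg algebra `H_q(f,g)`. -/
def QGHA (F : Type*) [Field F] (q : F) (f g : F[X]) : Type _ :=
  RingQuot (QGHARel F q f g)

namespace QGHA

variable {F : Type*} [Field F] (q : F) (f g : F[X])

instance : Ring (QGHA F q f g) :=
  inferInstanceAs (Ring (RingQuot (QGHARel F q f g)))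

instance : Algebra F (QGHA F q f g) :=
  inferInstanceAs (Algebra F (RingQuot (QGHARel F q f g)))

/-- The generator `x` of `H_q(f,g)`. -/
def x : QGHA F q f g :=
  RingQuot.mkAlgHom F (QGHARel F q f g) (FreeAlgebra.ι F QGHAGen.x)

/-- The generator `y` of `H_q(f,g)`. -/
def y : QGHA F q f g :=
  RingQuot.mkAlgHom F (QGHARel F q f g) (FreeAlgebra.ι F QGHAGen.y)

/-- The generator `h` of `H_q(f,g)`. -/
def h : QGHA F q f g :=
  RingQuot.mkAlgHom F (QGHARel F q f g) (FreeAlgebra.ι F QGHAGen.h)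

end QGHA
/-- The Gelfand–Kirillov dimension of an `F`-algebra `A`: the supremum over all
finite-dimensional subspaces `V ⊆ A` of `limsup_n log_n dim(V^n)`. -/
noncomputable def GKdim (F : Type*) (A : Type*) [Field F] [Ring A] [Algebra F A] : ENNReal :=
  ⨆ (V : Submodule F A) (_ : FiniteDimensional F V),
    Filter.limsup
      (fun n : ℕ => ENNReal.ofReal (Real.logb n (Module.finrank F ↥(V ^ n))))
      Filter.atTop

namespace QGHAAux

variable {F : Type*} [Field F]

/-- Iterated composition of `f`: `fc f i = f ∘ f ∘ ... ∘ f (i times)` applied to `X`. -/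
noncomputable def fc (f : F[X]) : ℕ → F[X]
  | 0 => X
  | i+1 => f.comp (fc f i)

@[simp] theorem fc_zero (f : F[X]) : fc f 0 = X := rfl
@[simp] theorem fc_succ (f : F[X]) (i : ℕ) : fc f (i+1) = f.comp (fc f i) := rfl

theorem comp_fc_succ (p f : F[X]) (i : ℕ) :
    p.comp (fc f (i+1)) = (p.comp f).comp (fc f i) := by
  rw [fc_succ, comp_assoc]

/-- The normal-form module: basis `x^i h^j y^k` encoded as `single (i,k) (X^j)`. -/
abbrev NF (F : Type*) [Field F] : Type _ := (ℕ × ℕ) →₀ F[X]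

noncomputable def Xop : NF F →ₗ[F] NF F :=
  Finsupp.lmapDomain F[X] F (fun ik => (ik.1 + 1, ik.2))

@[simp] theorem Xop_single (i k : ℕ) (p : F[X]) :
    Xop (Finsupp.single (i, k) p) = Finsupp.single (i+1, k) p := by
  simp [Xop, Finsupp.lmapDomain_apply, Finsupp.mapDomain_single]

noncomputable def Hop (f : F[X]) : NF F →ₗ[F] NF F :=
  Finsupp.lsum F fun ik => Finsupp.lsingle ik ∘ₗ LinearMap.mulLeft F (fc f ik.1)

@[simp] theorem Hop_single (f : F[X]) (i k : ℕ) (p : F[X]) :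
    Hop f (Finsupp.single (i, k) p) = Finsupp.single (i, k) (fc f i * p) := by
  simp [Hop]

theorem aeval_eq_comp (f r : F[X]) : aeval f r = r.comp f := by
  rw [aeval_def, comp, Polynomial.algebraMap_eq]

noncomputable def yP (q : F) (f g : F[X]) : ℕ → ℕ → F[X] →ₗ[F] NF F
  | 0, k => Finsupp.lsingle (0, k+1) ∘ₗ (aeval f).toLinearMap
  | i+1, k => q • (Xop ∘ₗ yP q f g i k)
      + Finsupp.lsingle (i, k) ∘ₗ LinearMap.mulLeft F (g.comp (fc f i))

theorem yP_zero (q : F) (f g : F[X]) (k : ℕ) (r : F[X]) :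
    yP q f g 0 k r = Finsupp.single (0, k+1) (r.comp f) := by
  simp [yP, aeval_eq_comp]

theorem yP_succ (q : F) (f g : F[X]) (i k : ℕ) (r : F[X]) :
    yP q f g (i+1) k r = q • Xop (yP q f g i k r)
      + Finsupp.single (i, k) ((g.comp (fc f i)) * r) := by
  simp [yP]

noncomputable def Yop (q : F) (f g : F[X]) : NF F →ₗ[F] NF F :=
  Finsupp.lsum F fun ik => yP q f g ik.1 ik.2

@[simp] theorem Yop_single (q : F) (f g : F[X]) (i k : ℕ) (p : F[X]) :
    Yop q f g (Finsupp.single (i, k) p) = yP q f g i k p := by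
  simp [Yop]

theorem Hop_pow_single (f : F[X]) (n i k : ℕ) (r : F[X]) :
    (Hop f ^ n) (Finsupp.single (i, k) r) = Finsupp.single (i, k) ((fc f i)^n * r) := by
  induction n generalizing r with
  | zero => simp
  | succ n ih =>
      rw [pow_succ, Module.End.mul_apply, Hop_single, ih, ← mul_assoc, ← pow_succ]

theorem aeval_Hop_single (f : F[X]) (p : F[X]) (i k : ℕ) (r : F[X]) :
    aeval (Hop f) p (Finsupp.single (i, k) r)
      = Finsupp.single (i, k) (p.comp (fc f i) * r) := by
  induction p using Polynomial.induction_on' with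
  | add p s hp hs => simp [hp, hs, add_comp, add_mul, Finsupp.single_add]
  | monomial n a =>
      rw [aeval_monomial, ← C_mul_X_pow_eq_monomial]
      rw [Module.End.mul_apply, Hop_pow_single, Module.algebraMap_end_apply]
      simp only [mul_comp, C_comp, X_pow_comp, Finsupp.smul_single, smul_eq_C_mul, mul_assoc]

end QGHAAux
namespace QGHAAux

variable {F : Type*} [Field F]

theorem aeval_Hop_Xop (f : F[X]) (p : F[X]) (v : NF F) :
    aeval (Hop f) p (Xop v) = Xop (aeval (Hop f) (p.comp f) v) := by
  have : (aeval (Hop f) p) ∘ₗ Xop = Xop ∘ₗ (aeval (Hop f) (p.comp f)) := by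
    apply Finsupp.lhom_ext
    rintro ⟨i, k⟩ r
    simp only [LinearMap.comp_apply, Xop_single, aeval_Hop_single]
    rw [comp_fc_succ]
  exact LinearMap.congr_fun this v

theorem aeval_Hop_yP (q : F) (f g : F[X]) (i : ℕ) (p : F[X]) (k : ℕ) (r : F[X]) :
    aeval (Hop f) (p.comp f) (yP q f g i k r) = yP q f g i k (p.comp (fc f i) * r) := by
  induction i generalizing p with
  | zero =>
      rw [yP_zero, yP_zero, aeval_Hop_single]
      simp [mul_comp]
  | succ i ih =>
      rw [yP_succ, yP_succ, map_add, map_smul]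
      rw [aeval_Hop_Xop, ih (p.comp f), aeval_Hop_single, comp_fc_succ, mul_left_comm]

end QGHAAux
namespace QGHAAux

variable {F : Type*} [Field F]

/-- Action of the free algebra on the normal-form module. -/
noncomputable def rep (q : F) (f g : F[X]) :
    FreeAlgebra F QGHAGen →ₐ[F] Module.End F (NF F) :=
  FreeAlgebra.lift F fun t => match t with
    | QGHAGen.x => Xop
    | QGHAGen.y => Yop q f g
    | QGHAGen.h => Hop f

@[simp] theorem rep_x (q : F) (f g : F[X]) :
    rep q f g (FreeAlgebra.ι F QGHAGen.x) = Xop := by simp [rep]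
@[simp] theorem rep_y (q : F) (f g : F[X]) :
    rep q f g (FreeAlgebra.ι F QGHAGen.y) = Yop q f g := by simp [rep]
@[simp] theorem rep_h (q : F) (f g : F[X]) :
    rep q f g (FreeAlgebra.ι F QGHAGen.h) = Hop f := by simp [rep]

theorem rep_aeval (q : F) (f g p : F[X]) :
    rep q f g (aeval (FreeAlgebra.ι F QGHAGen.h) p) = aeval (Hop f) p := by
  rw [← aeval_algHom_apply, rep_h]

theorem rep_rel (q : F) (f g : F[X]) :
    ∀ ⦃a b : FreeAlgebra F QGHAGen⦄, QGHARel F q f g a b → rep q f g a = rep q f g b := by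
  intro a b hab
  induction hab with
  | hx =>
      simp only [map_mul, rep_x, rep_h, rep_aeval]
      apply Finsupp.lhom_ext
      rintro ⟨i, k⟩ r
      simp only [Module.End.mul_apply, Xop_single, Hop_single, aeval_Hop_single, fc_succ]
  | yh =>
      simp only [map_mul, rep_x, rep_y, rep_h, rep_aeval]
      apply Finsupp.lhom_ext
      rintro ⟨i, k⟩ r
      simp only [Module.End.mul_apply, Yop_single, Hop_single]
      have := aeval_Hop_yP q f g i X k r
      rw [X_comp] at this
      rw [this, X_comp]
  | yx =>
      simp only [map_add, map_smul, map_mul, rep_x, rep_y, rep_aeval]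
      apply Finsupp.lhom_ext
      rintro ⟨i, k⟩ r
      simp only [LinearMap.add_apply, LinearMap.smul_apply, Module.End.mul_apply,
        Xop_single, Yop_single, aeval_Hop_single, yP_succ]

/-- The representation of `H_q(f,g)` on the normal-form module. -/
noncomputable def Phi (q : F) (f g : F[X]) :
    QGHA F q f g →ₐ[F] Module.End F (NF F) :=
  RingQuot.liftAlgHom F ⟨rep q f g, rep_rel q f g⟩

@[simp] theorem Phi_x (q : F) (f g : F[X]) : Phi q f g (QGHA.x q f g) = Xop := by
  rw [Phi, QGHA.x]; erw [RingQuot.liftAlgHom_mkAlgHom_apply]; rw [rep_x]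
@[simp] theorem Phi_y (q : F) (f g : F[X]) : Phi q f g (QGHA.y q f g) = Yop q f g := by
  rw [Phi, QGHA.y]; erw [RingQuot.liftAlgHom_mkAlgHom_apply]; rw [rep_y]
@[simp] theorem Phi_h (q : F) (f g : F[X]) : Phi q f g (QGHA.h q f g) = Hop f := by
  rw [Phi, QGHA.h]; erw [RingQuot.liftAlgHom_mkAlgHom_apply]; rw [rep_h]

end QGHAAux
namespace QGHAAux

variable {F : Type*} [Field F]

/-- Polynomials with pairwise distinct `natDegree`s (and all nonzero) are linearly
independent. -/
theorem linearIndependent_of_natDegree_inj {ι : Type*} (p : ι → F[X])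
    (h0 : ∀ t, p t ≠ 0) (hinj : Function.Injective fun t => (p t).natDegree) :
    LinearIndependent F p := by
  classical
  rw [linearIndependent_iff']
  intro s c hsum i hi
  by_contra hci
  have hne : (s.filter fun j => c j ≠ 0).Nonempty := ⟨i, Finset.mem_filter.2 ⟨hi, hci⟩⟩
  obtain ⟨t0, ht0, hmax⟩ := Finset.exists_max_image _ (fun j => (p j).natDegree) hne
  obtain ⟨ht0s, hct0⟩ := Finset.mem_filter.1 ht0
  have hcoeff : ((∑ j ∈ s, c j • p j).coeff (p t0).natDegree)
      = c t0 * (p t0).leadingCoeff := by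
    rw [finset_sum_coeff]
    rw [Finset.sum_eq_single t0]
    · rw [coeff_smul, smul_eq_mul]; rfl
    · intro j hj hjne
      rcases eq_or_ne (c j) 0 with hc | hc
      · simp [hc]
      · have hjf : j ∈ s.filter fun j => c j ≠ 0 := Finset.mem_filter.2 ⟨hj, hc⟩
        have hlt : (p j).natDegree < (p t0).natDegree := by
          refine lt_of_le_of_ne (hmax j hjf) fun hEq => hjne (hinj hEq)
        simp [coeff_smul, coeff_eq_zero_of_natDegree_lt hlt]
    · intro h; exact absurd ht0s h
  rw [hsum] at hcoeff
  simp only [coeff_zero] at hcoeff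
  exact hct0 <| by
    rcases mul_eq_zero.1 hcoeff.symm with h | h
    · exact h
    · exact absurd h (leadingCoeff_ne_zero.2 (h0 t0))

theorem Xop_pow_single (a i k : ℕ) (p : F[X]) :
    ((Xop : NF F →ₗ[F] NF F) ^ a) (Finsupp.single (i, k) p) = Finsupp.single (i + a, k) p := by
  induction a generalizing i with
  | zero => simp
  | succ a ih =>
      rw [pow_succ, Module.End.mul_apply, Xop_single, ih]
      congr 2
      omega

theorem Yop_pow_single_one (q : F) (f g : F[X]) (u k : ℕ) :
    ((Yop q f g) ^ u) (Finsupp.single ((0 : ℕ), k) (1 : F[X]))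
      = Finsupp.single ((0 : ℕ), k + u) (1 : F[X]) := by
  induction u generalizing k with
  | zero => simp
  | succ u ih =>
      rw [pow_succ, Module.End.mul_apply, Yop_single, yP_zero, one_comp, ih]
      congr 2
      omega

end QGHAAux

namespace QGHA

variable {F : Type*} [Field F] (q : F) (f g : F[X])

open QGHAAux

theorem rel_hx : h q f g * x q f g = x q f g * aeval (h q f g) f := by
  have := RingQuot.mkAlgHom_rel F (QGHARel.hx (F := F) (q := q) (f := f) (g := g))
  rw [map_mul, map_mul, ← aeval_algHom_apply] at this
  exact this

theorem rel_yh : y q f g * h q f g = aeval (h q f g) f * y q f g := by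
  have := RingQuot.mkAlgHom_rel F (QGHARel.yh (F := F) (q := q) (f := f) (g := g))
  rw [map_mul, map_mul, ← aeval_algHom_apply] at this
  exact this

theorem rel_yx : y q f g * x q f g = q • (x q f g * y q f g) + aeval (h q f g) g := by
  have := RingQuot.mkAlgHom_rel F (QGHARel.yx (F := F) (q := q) (f := f) (g := g))
  rw [map_mul, map_add, map_smul, map_mul, ← aeval_algHom_apply] at this
  exact this

/-- The normal-form monomials `x^i h^j y^k`. -/
noncomputable def M (i j k : ℕ) : QGHA F q f g :=
  x q f g ^ i * h q f g ^ j * y q f g ^ k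

theorem M_zero : M q f g 0 0 0 = 1 := by simp [M]

/-- The evaluation of the normal-form representation at the cyclic vector. -/
noncomputable def psi : QGHA F q f g →ₗ[F] NF F where
  toFun v := Phi q f g v (Finsupp.single ((0:ℕ), (0:ℕ)) (1 : F[X]))
  map_add' a b := by simp only [map_add, LinearMap.add_apply]
  map_smul' c a := by simp only [map_smul, LinearMap.smul_apply, RingHom.id_apply]

theorem psi_apply (v : QGHA F q f g) :
    psi q f g v = Phi q f g v (Finsupp.single ((0:ℕ), (0:ℕ)) (1 : F[X])) := rfl

theorem psi_word (a j1 m j2 u : ℕ) :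
    psi q f g (x q f g ^ a * h q f g ^ j1 * x q f g ^ m * h q f g ^ j2 * y q f g ^ u)
      = Finsupp.single (m + a, u) ((fc f m) ^ j1 * ((X : F[X]) ^ j2 * 1)) := by
  rw [psi_apply]
  simp only [map_mul, map_pow, Phi_x, Phi_y, Phi_h]
  rw [Module.End.mul_apply, Module.End.mul_apply, Module.End.mul_apply, Module.End.mul_apply]
  rw [Yop_pow_single_one, Hop_pow_single, Xop_pow_single, Hop_pow_single, Xop_pow_single]
  simp [fc]

theorem psi_M (i j k : ℕ) :
    psi q f g (M q f g i j k) = Finsupp.single (i, k) ((X : F[X]) ^ j) := by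
  have := psi_word q f g i j 0 0 k
  simpa [M, mul_assoc] using this

/-- The normal-form monomials are linearly independent. -/
theorem linearIndependent_M :
    LinearIndependent F (fun t : ℕ × ℕ × ℕ => M q f g t.1 t.2.1 t.2.2) := by
  apply LinearIndependent.of_comp (psi q f g)
  have hX : LinearIndependent F fun j : ℕ => (X : F[X]) ^ j := by
    apply linearIndependent_of_natDegree_inj
    · intro t; exact pow_ne_zero _ X_ne_zero
    · intro a b hab
      simpa [natDegree_pow] using hab
  have hsingle := Finsupp.linearIndependent_single
    (R := F) (M := F[X]) (φ := fun _ : ℕ × ℕ => ℕ)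
    (f := fun _ j => (X : F[X]) ^ j) (fun _ => hX)
  have hcomp := hsingle.comp
    (fun t : ℕ × ℕ × ℕ => (⟨(t.1, t.2.2), t.2.1⟩ : Σ _ : ℕ × ℕ, ℕ))
    (Function.LeftInverse.injective
      (g := fun s : Σ _ : ℕ × ℕ, ℕ => (s.1.1, s.2, s.1.2)) fun t => rfl)
  convert hcomp using 1
  funext t
  simp [Function.comp, psi_M]

end QGHA
namespace QGHA

variable {F : Type*} [Field F] (q : F) (f g : F[X])

open QGHAAux Submodule

theorem hpow_mul_x (n : ℕ) :
    h q f g ^ n * x q f g = x q f g * aeval (h q f g) f ^ n := by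
  induction n with
  | zero => simp
  | succ n ih =>
      rw [pow_succ', mul_assoc, ih, ← mul_assoc, rel_hx, mul_assoc, ← pow_succ']

theorem aeval_mul_x (p : F[X]) :
    aeval (h q f g) p * x q f g = x q f g * aeval (h q f g) (p.comp f) := by
  induction p using Polynomial.induction_on' with
  | add p s hp hs => rw [map_add, add_mul, hp, hs, add_comp, map_add, mul_add]
  | monomial n a =>
      rw [← C_mul_X_pow_eq_monomial, mul_comp, C_comp, X_pow_comp]
      simp only [map_mul, map_pow, aeval_X, aeval_C]
      rw [mul_assoc, hpow_mul_x, ← mul_assoc, Algebra.commutes, mul_assoc]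

theorem aeval_mul_xpow (p : F[X]) (i : ℕ) :
    aeval (h q f g) p * x q f g ^ i
      = x q f g ^ i * aeval (h q f g) (p.comp (fc f i)) := by
  induction i generalizing p with
  | zero => simp
  | succ i ih =>
      rw [pow_succ', ← mul_assoc, aeval_mul_x, mul_assoc, ih (p.comp f), ← mul_assoc,
        ← comp_fc_succ]

theorem y_mul_hpow (n : ℕ) :
    y q f g * h q f g ^ n = aeval (h q f g) f ^ n * y q f g := by
  induction n with
  | zero => simp
  | succ n ih =>
      rw [pow_succ, ← mul_assoc, ih, mul_assoc, rel_yh, ← mul_assoc, ← pow_succ]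

theorem y_mul_aeval (p : F[X]) :
    y q f g * aeval (h q f g) p = aeval (h q f g) (p.comp f) * y q f g := by
  induction p using Polynomial.induction_on' with
  | add p s hp hs => rw [map_add, mul_add, hp, hs, add_comp, map_add, add_mul]
  | monomial n a =>
      rw [← C_mul_X_pow_eq_monomial, mul_comp, C_comp, X_pow_comp]
      simp only [map_mul, map_pow, aeval_X, aeval_C]
      rw [← mul_assoc, ← Algebra.commutes, mul_assoc, y_mul_hpow, ← mul_assoc]

/-- The span of normal form monomials `x^i h^j y^k` with `i + k ≤ m`, `j ≤ D`. -/
noncomputable def Uspan (m D : ℕ) : Submodule F (QGHA F q f g) :=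
  span F {u | ∃ i j k, i + k ≤ m ∧ j ≤ D ∧ u = M q f g i j k}

theorem Uspan_mono {m D m' D' : ℕ} (hm : m ≤ m') (hD : D ≤ D') :
    Uspan q f g m D ≤ Uspan q f g m' D' :=
  span_mono (by rintro u ⟨i, j, k, h1, h2, rfl⟩
                exact ⟨i, j, k, h1.trans hm, h2.trans hD, rfl⟩)

theorem M_mem_Uspan {i j k m D : ℕ} (h1 : i + k ≤ m) (h2 : j ≤ D) :
    M q f g i j k ∈ Uspan q f g m D :=
  subset_span ⟨i, j, k, h1, h2, rfl⟩

theorem mem_Uspan {i k m D : ℕ} (p : F[X]) (hik : i + k ≤ m) (hp : p.natDegree ≤ D) :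
    x q f g ^ i * aeval (h q f g) p * y q f g ^ k ∈ Uspan q f g m D := by
  rw [aeval_eq_sum_range, Finset.mul_sum, Finset.sum_mul]
  apply Submodule.sum_mem
  intro j hj
  rw [mul_smul_comm, smul_mul_assoc]
  exact Submodule.smul_mem _ _ <| M_mem_Uspan q f g hik
    (le_trans (Nat.lt_succ_iff.mp (Finset.mem_range.1 hj)) hp)

theorem x_mul_M (i j k : ℕ) :
    x q f g * M q f g i j k = M q f g (i+1) j k := by
  rw [M, M, pow_succ']
  simp [mul_assoc]

theorem xmul_Uspan {m D : ℕ} {v : QGHA F q f g} (hv : v ∈ Uspan q f g m D) :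
    x q f g * v ∈ Uspan q f g (m+1) D := by
  induction hv using Submodule.span_induction with
  | mem u hu =>
      obtain ⟨i, j, k, h1, h2, rfl⟩ := hu
      rw [x_mul_M]
      exact M_mem_Uspan q f g (by omega) h2
  | zero => simp
  | add a b _ _ ha hb => rw [mul_add]; exact Submodule.add_mem _ ha hb
  | smul c a _ ha => rw [mul_smul_comm]; exact Submodule.smul_mem _ _ ha

theorem fc_natDegree_le (hf : f.natDegree ≤ 1) (i : ℕ) : (fc f i).natDegree ≤ 1 := by
  induction i with
  | zero => simp
  | succ i ih =>
      refine le_trans (natDegree_comp_le) ?_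
      calc f.natDegree * (fc f i).natDegree ≤ 1 * 1 := Nat.mul_le_mul hf ih
      _ = 1 := by norm_num

theorem M_eq_aeval (i j k : ℕ) :
    M q f g i j k = x q f g ^ i * aeval (h q f g) ((X : F[X]) ^ j) * y q f g ^ k := by
  rw [M, map_pow, aeval_X]

theorem ymul_word (hf : f.natDegree ≤ 1) (i : ℕ) :
    ∀ (p : F[X]) (k D : ℕ), p.natDegree + g.natDegree ≤ D →
      y q f g * (x q f g ^ i * aeval (h q f g) p * y q f g ^ k)
        ∈ Uspan q f g (i + k + 1) D := by
  induction i with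
  | zero =>
      intro p k D hD
      rw [pow_zero, one_mul, ← mul_assoc, y_mul_aeval, mul_assoc, ← pow_succ']
      have hdeg : (p.comp f).natDegree ≤ D := by
        refine le_trans natDegree_comp_le (le_trans ?_ hD)
        calc p.natDegree * f.natDegree ≤ p.natDegree * 1 := Nat.mul_le_mul_left _ hf
        _ = p.natDegree := by omega
        _ ≤ p.natDegree + g.natDegree := by omega
      have := mem_Uspan q f g (i := 0) (k := k+1) (m := k+1) (p := p.comp f)
        (by omega) hdeg
      simpa [pow_zero, one_mul] using this
  | succ i ih =>
      intro p k D hD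
      have hsplit : y q f g * (x q f g ^ (i+1) * aeval (h q f g) p * y q f g ^ k)
          = q • (x q f g * (y q f g * (x q f g ^ i * aeval (h q f g) p * y q f g ^ k)))
            + x q f g ^ i * aeval (h q f g) (g.comp (fc f i) * p) * y q f g ^ k := by
        have e1 : x q f g ^ (i+1) * aeval (h q f g) p * y q f g ^ k
            = x q f g * (x q f g ^ i * aeval (h q f g) p * y q f g ^ k) := by
          rw [pow_succ']; simp [mul_assoc]
        rw [e1, ← mul_assoc, rel_yx, add_mul, smul_mul_assoc, mul_assoc]
        congr 1
        rw [← mul_assoc, ← mul_assoc, aeval_mul_xpow]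
        simp [map_mul, mul_assoc]
      rw [hsplit]
      apply Submodule.add_mem
      · apply Submodule.smul_mem
        have := xmul_Uspan q f g (ih p k D hD)
        have h2 : i + k + 1 + 1 = i + 1 + k + 1 := by omega
        rwa [h2] at this
      · refine mem_Uspan q f g _ (by omega) ?_
        refine le_trans natDegree_mul_le (le_trans ?_ hD)
        have h1 : (g.comp (fc f i)).natDegree ≤ g.natDegree := by
          refine le_trans natDegree_comp_le ?_
          calc g.natDegree * (fc f i).natDegree ≤ g.natDegree * 1 :=
            Nat.mul_le_mul_left _ (fc_natDegree_le f hf i)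
          _ = g.natDegree := by omega
        omega

/-- The generating subspace spanned by `1, x, y, h`. -/
noncomputable def Wgen : Submodule F (QGHA F q f g) :=
  span F {1, x q f g, y q f g, h q f g}

theorem Wpow_le_Uspan (hf : f.natDegree ≤ 1) (n : ℕ) :
    Wgen q f g ^ n ≤ Uspan q f g n ((g.natDegree + 1) * n) := by
  set c := g.natDegree + 1 with hc
  induction n with
  | zero =>
      rw [pow_zero, Submodule.one_eq_span]
      refine span_le.2 ?_
      rintro u rfl
      rw [← M_zero q f g]
      exact M_mem_Uspan q f g (by omega) (by omega)
  | succ n ih =>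
      rw [pow_succ']
      refine le_trans (mul_le_mul_right ih _) ?_
      rw [Wgen, Uspan, Submodule.span_mul_span]
      refine span_le.2 ?_
      rintro u ⟨w, hw, v, hv, rfl⟩
      obtain ⟨i, j, k, h1, h2, rfl⟩ := hv
      have hjle : j ≤ c * (n+1) := by
        refine h2.trans ?_
        have : c * n ≤ c * (n+1) := Nat.mul_le_mul_left _ (by omega)
        omega
      simp only [Set.mem_insert_iff, Set.mem_singleton_iff] at hw
      rcases hw with rfl | rfl | rfl | rfl
      · show (1 : QGHA F q f g) * M q f g i j k ∈ Uspan q f g (n+1) (c*(n+1))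
        rw [one_mul]
        exact M_mem_Uspan q f g (by omega) hjle
      · show x q f g * M q f g i j k ∈ Uspan q f g (n+1) (c*(n+1))
        rw [x_mul_M]
        exact M_mem_Uspan q f g (by omega) hjle
      · show y q f g * M q f g i j k ∈ Uspan q f g (n+1) (c*(n+1))
        rw [M_eq_aeval]
        have := ymul_word q f g hf i ((X : F[X])^j) k (c * (n+1)) (by
          have : ((X : F[X])^j).natDegree = j := by simp [natDegree_pow]
          rw [this]
          have : c * n + c = c * (n + 1) := by ring
          omega)
        exact Uspan_mono q f g (by omega) (le_refl _) this
      · show h q f g * M q f g i j k ∈ Uspan q f g (n+1) (c*(n+1))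
        have hh : h q f g * x q f g ^ i
            = x q f g ^ i * aeval (h q f g) (fc f i) := by
          have := aeval_mul_xpow q f g X i
          rwa [aeval_X, X_comp] at this
        have hcomb : aeval (h q f g) (fc f i) * h q f g ^ j
            = aeval (h q f g) (fc f i * (X : F[X])^j) := by
          rw [map_mul, map_pow, aeval_X]
        rw [M, ← mul_assoc, ← mul_assoc, hh, mul_assoc (x q f g ^ i), hcomb]
        refine mem_Uspan q f g _ (by omega) ?_
        refine le_trans natDegree_mul_le ?_
        have h3 : ((X : F[X])^j).natDegree = j := by simp [natDegree_pow]
        have := fc_natDegree_le f hf i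
        rw [h3]
        have : c * n + c = c * (n + 1) := by ring
        omega

theorem one_le_Wpow (d : ℕ) : (1 : Submodule F (QGHA F q f g)) ≤ Wgen q f g ^ d := by
  induction d with
  | zero => rw [pow_zero]
  | succ d ih =>
      rw [pow_succ']
      calc (1 : Submodule F (QGHA F q f g)) = 1 * 1 := (one_mul _).symm
      _ ≤ Wgen q f g * Wgen q f g ^ d := by
          refine mul_le_mul' ?_ ih
          rw [Submodule.one_le]
          exact subset_span (by simp)

theorem Wpow_mono {s t : ℕ} (hst : s ≤ t) : Wgen q f g ^ s ≤ Wgen q f g ^ t := by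
  obtain ⟨d, rfl⟩ := Nat.exists_eq_add_of_le hst
  rw [pow_add]
  calc Wgen q f g ^ s = Wgen q f g ^ s * 1 := (mul_one _).symm
  _ ≤ Wgen q f g ^ s * Wgen q f g ^ d :=
      mul_le_mul_right (one_le_Wpow q f g d) _

theorem word_mem_Wpow (a j1 m j2 u n : ℕ) (hn : a + j1 + m + j2 + u ≤ n) :
    x q f g ^ a * h q f g ^ j1 * x q f g ^ m * h q f g ^ j2 * y q f g ^ u
      ∈ Wgen q f g ^ n := by
  have hx : x q f g ∈ Wgen q f g := subset_span (by simp)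
  have hy : y q f g ∈ Wgen q f g := subset_span (by simp)
  have hh : h q f g ∈ Wgen q f g := subset_span (by simp)
  refine Wpow_mono q f g hn ?_
  have h1 := Submodule.mul_mem_mul (Submodule.pow_mem_pow _ hx a)
    (Submodule.pow_mem_pow _ hh j1)
  rw [← pow_add] at h1
  have h2 := Submodule.mul_mem_mul h1 (Submodule.pow_mem_pow _ hx m)
  rw [← pow_add] at h2
  have h3 := Submodule.mul_mem_mul h2 (Submodule.pow_mem_pow _ hh j2)
  rw [← pow_add] at h3
  have h4 := Submodule.mul_mem_mul h3 (Submodule.pow_mem_pow _ hy u)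
  rw [← pow_add] at h4
  exact h4

theorem M_mem_Wpow (i j k n : ℕ) (hn : i + j + k ≤ n) :
    M q f g i j k ∈ Wgen q f g ^ n := by
  have := word_mem_Wpow q f g i j 0 0 k n (by omega)
  simpa [M, mul_assoc] using this

end QGHA
namespace QGHA

variable {F : Type*} [Field F] (q : F) (f g : F[X])

open QGHAAux Submodule Module Pointwise

theorem finite_set_pow {A : Type*} [Monoid A] {s : Set A} (hs : s.Finite) (n : ℕ) :
    ((s ^ n : Set A)).Finite := by
  induction n with
  | zero => rw [pow_zero]; exact Set.finite_one
  | succ n ih => rw [pow_succ]; exact ih.mul hs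

instance finiteDimensional_Wpow (n : ℕ) :
    FiniteDimensional F ↥(Wgen q f g ^ n) := by
  rw [Wgen, Submodule.span_pow]
  exact FiniteDimensional.span_of_finite F <| finite_set_pow
    ((((Set.finite_singleton _).insert _).insert _).insert _) n

theorem finrank_le_of_le_Uspan {m D : ℕ} {S : Submodule F (QGHA F q f g)}
    (hS : S ≤ Uspan q f g m D) :
    finrank F ↥S ≤ (m+1) * ((D+1) * (m+1)) := by
  classical
  set s : Finset (QGHA F q f g) :=
    ((Finset.range (m+1)) ×ˢ (Finset.range (D+1)) ×ˢ (Finset.range (m+1))).image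
      (fun t : ℕ × ℕ × ℕ => M q f g t.1 t.2.1 t.2.2) with hs
  have hle : Uspan q f g m D ≤ span F (s : Set (QGHA F q f g)) := by
    refine span_le.2 ?_
    rintro u ⟨i, j, k, h1, h2, rfl⟩
    refine subset_span ?_
    simp only [hs, Finset.coe_image, Set.mem_image, Finset.mem_coe, Finset.mem_product,
      Finset.mem_range]
    exact ⟨(i, j, k), ⟨show i < m+1 by omega, show j < D+1 by omega,
      show k < m+1 by omega⟩, rfl⟩
  haveI : FiniteDimensional F ↥(span F (s : Set (QGHA F q f g))) :=
    FiniteDimensional.span_of_finite F s.finite_toSet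
  refine le_trans (Submodule.finrank_mono (le_trans hS hle)) ?_
  refine le_trans (finrank_span_finset_le_card s) ?_
  refine le_trans (Finset.card_image_le) ?_
  simp [Finset.card_product, Nat.mul_assoc]

theorem card_le_finrank_of_li {ι : Type*} [Fintype ι] {S : Submodule F (QGHA F q f g)}
    [FiniteDimensional F S] {v : ι → QGHA F q f g} (hv : LinearIndependent F v)
    (hm : ∀ t, v t ∈ S) : Fintype.card ι ≤ finrank F S := by
  let v' : ι → S := fun t => ⟨v t, hm t⟩
  have hv' : LinearIndependent F v' := by
    apply LinearIndependent.of_comp S.subtype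
    convert hv
    rfl
  exact hv'.fintype_card_le_finrank

theorem finrank_Wpow_lower1 (n : ℕ) :
    (n/3 + 1)^3 ≤ finrank F ↥(Wgen q f g ^ n) := by
  classical
  set K := n/3 + 1 with hK
  have hli : LinearIndependent F
      (fun t : Fin K × Fin K × Fin K => M q f g t.1 t.2.1 t.2.2) := by
    have := (linearIndependent_M q f g).comp
      (fun t : Fin K × Fin K × Fin K => ((t.1 : ℕ), (t.2.1 : ℕ), (t.2.2 : ℕ)))
      (by rintro ⟨a1, a2, a3⟩ ⟨b1, b2, b3⟩ hab
          simp only [Prod.mk.injEq] at hab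
          obtain ⟨e1, e2, e3⟩ := hab
          exact Prod.ext (Fin.val_injective e1)
            (Prod.ext (Fin.val_injective e2) (Fin.val_injective e3)))
    exact this
  have := card_le_finrank_of_li q f g hli (fun t => M_mem_Wpow q f g _ _ _ n (by
    have h1 := t.1.isLt
    have h2 := t.2.1.isLt
    have h3 := t.2.2.isLt
    omega))
  have hcard : Fintype.card (Fin K × Fin K × Fin K) = K^3 := by
    simp [Fintype.card_prod]; ring
  rw [hcard] at this
  exact this

theorem fc_natDegree (hd : 1 ≤ f.natDegree) (i : ℕ) :
    (fc f i).natDegree = f.natDegree ^ i := by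
  induction i with
  | zero => simp
  | succ i ih => rw [fc_succ, natDegree_comp, ih, pow_succ']

theorem fc_ne_zero (hd : 1 ≤ f.natDegree) (i : ℕ) : fc f i ≠ 0 := by
  have h1 : 0 < (fc f i).natDegree := by
    rw [fc_natDegree f hd i]
    exact Nat.pow_pos (by omega)
  intro h0
  rw [h0] at h1
  simp at h1

theorem finrank_Wpow_lower2 (hd : 2 ≤ f.natDegree) (n : ℕ) :
    (n/8)^4 ≤ finrank F ↥(Wgen q f g ^ n) := by
  classical
  set K := n/8 with hK
  set m := n/2 with hm
  set d := f.natDegree with hdd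
  have hKB : K ≤ d ^ m := by
    have h1 : m < 2 ^ m := Nat.lt_two_pow_self
    have h2 : (2:ℕ) ^ m ≤ d ^ m := Nat.pow_le_pow_left (by omega) _
    have hKm : K ≤ m := by omega
    omega
  -- the word family
  set w : Fin K × Fin K × Fin K × Fin K → QGHA F q f g :=
    fun t => x q f g ^ (t.1 : ℕ) * h q f g ^ (t.2.1 : ℕ) * x q f g ^ m
      * h q f g ^ (t.2.2.1 : ℕ) * y q f g ^ (t.2.2.2 : ℕ) with hw
  have hdeg : ∀ t : Fin K × Fin K × Fin K × Fin K,
      ((fc f m) ^ ((t.2.1 : ℕ)) * ((X : F[X]) ^ ((t.2.2.1 : ℕ)) * 1)).natDegree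
        = (t.2.1 : ℕ) * d ^ m + (t.2.2.1 : ℕ) := by
    intro t
    rw [mul_one, natDegree_mul (pow_ne_zero _ (fc_ne_zero f (by omega) m))
      (pow_ne_zero _ X_ne_zero), natDegree_pow, natDegree_pow,
      fc_natDegree f (by omega) m, natDegree_X, mul_one]
  have hpsi : ∀ t : Fin K × Fin K × Fin K × Fin K,
      psi q f g (w t) = Finsupp.single (m + (t.1 : ℕ), (t.2.2.2 : ℕ))
        ((fc f m) ^ ((t.2.1 : ℕ)) * ((X : F[X]) ^ ((t.2.2.1 : ℕ)) * 1)) := by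
    intro t
    exact psi_word q f g _ _ m _ _
  have hli : LinearIndependent F w := by
    apply LinearIndependent.of_comp (psi q f g)
    have hpoly : LinearIndependent F
        (fun s : Fin K × Fin K => (fc f m) ^ ((s.1 : ℕ)) * ((X : F[X]) ^ ((s.2 : ℕ)) * 1)) := by
      apply linearIndependent_of_natDegree_inj
      · intro s
        exact mul_ne_zero (pow_ne_zero _ (fc_ne_zero f (by omega) m))
          (by rw [mul_one]; exact pow_ne_zero _ X_ne_zero)
      · intro s1 s2 hs
        simp only at hs
        rw [mul_one, mul_one, natDegree_mul (pow_ne_zero _ (fc_ne_zero f (by omega) m))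
          (pow_ne_zero _ X_ne_zero), natDegree_mul (pow_ne_zero _ (fc_ne_zero f (by omega) m))
          (pow_ne_zero _ X_ne_zero), natDegree_pow, natDegree_pow, natDegree_pow,
          natDegree_pow, fc_natDegree f (by omega) m, natDegree_X, mul_one, mul_one] at hs
        have hb1 : (s1.2 : ℕ) < d ^ m := lt_of_lt_of_le s1.2.isLt hKB
        have hb2 : (s2.2 : ℕ) < d ^ m := lt_of_lt_of_le s2.2.isLt hKB
        have hBpos : 0 < d ^ m := Nat.pow_pos (by omega)
        have key : ∀ a r : ℕ, r < d ^ m → (a * d ^ m + r) / (d ^ m) = a := by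
          intro a r hr
          rw [mul_comm, Nat.mul_add_div hBpos, Nat.div_eq_of_lt hr, add_zero]
        have e1 : (s1.1 : ℕ) = (s2.1 : ℕ) := by
          have k1 := key (s1.1 : ℕ) (s1.2 : ℕ) hb1
          have k2 := key (s2.1 : ℕ) (s2.2 : ℕ) hb2
          rw [← k1, ← k2, hs]
        rw [e1] at hs
        have e2 : (s1.2 : ℕ) = (s2.2 : ℕ) := by omega
        exact Prod.ext (Fin.val_injective e1) (Fin.val_injective e2)
    have hsingle := Finsupp.linearIndependent_single
      (R := F) (M := F[X]) (φ := fun _ : ℕ × ℕ => Fin K × Fin K)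
      (f := fun _ s => (fc f m) ^ ((s.1 : ℕ)) * ((X : F[X]) ^ ((s.2 : ℕ)) * 1))
      (fun _ => hpoly)
    have hcomp := hsingle.comp
      (fun t : Fin K × Fin K × Fin K × Fin K =>
        (⟨(m + (t.1 : ℕ), (t.2.2.2 : ℕ)), (t.2.1, t.2.2.1)⟩ : Σ _ : ℕ × ℕ, Fin K × Fin K))
      (by rintro ⟨a1, a2, a3, a4⟩ ⟨b1, b2, b3, b4⟩ hab
          simp only [Sigma.mk.inj_iff, Prod.mk.injEq, heq_eq_eq] at hab
          obtain ⟨⟨e1, e4⟩, e2, e3⟩ := hab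
          have : a1 = b1 := Fin.val_injective (by omega)
          have : a4 = b4 := Fin.val_injective e4
          simp_all)
    convert hcomp using 1
    funext t
    simp only [Function.comp_apply, hpsi t]
  have hmem : ∀ t, w t ∈ Wgen q f g ^ n := by
    intro t
    refine word_mem_Wpow q f g _ _ _ _ _ n ?_
    have h1 := t.1.isLt
    have h2 := t.2.1.isLt
    have h3 := t.2.2.1.isLt
    have h4 := t.2.2.2.isLt
    omega
  have := card_le_finrank_of_li q f g hli hmem
  have hcard : Fintype.card (Fin K × Fin K × Fin K × Fin K) = K^4 := by
    simp [Fintype.card_prod]; ring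
  rw [hcard] at this
  exact this

theorem exists_le_Wpow (V : Submodule F (QGHA F q f g)) (hV : FiniteDimensional F V) :
    ∃ m, V ≤ Wgen q f g ^ m := by
  classical
  have hall : ∀ v : QGHA F q f g, ∃ m, v ∈ Wgen q f g ^ m := by
    intro v
    obtain ⟨a, rfl⟩ := RingQuot.mkAlgHom_surjective F (QGHARel F q f g) v
    induction a with
    | grade0 r =>
        refine ⟨0, ?_⟩
        rw [pow_zero, Submodule.one_eq_span, AlgHom.commutes,
          Algebra.algebraMap_eq_smul_one]
        exact Submodule.smul_mem _ _ (subset_span rfl)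
    | grade1 t =>
        refine ⟨1, ?_⟩
        rw [pow_one, Wgen]
        cases t
        · exact subset_span (Or.inr (Or.inl rfl))
        · exact subset_span (Or.inr (Or.inr (Or.inl rfl)))
        · exact subset_span (Or.inr (Or.inr (Or.inr rfl)))
    | mul a b ha hb =>
        obtain ⟨ma, hma⟩ := ha
        obtain ⟨mb, hmb⟩ := hb
        refine ⟨ma + mb, ?_⟩
        rw [map_mul, pow_add]
        exact Submodule.mul_mem_mul hma hmb
    | add a b ha hb =>
        obtain ⟨ma, hma⟩ := ha
        obtain ⟨mb, hmb⟩ := hb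
        refine ⟨max ma mb, ?_⟩
        rw [map_add]
        exact Submodule.add_mem _ (Wpow_mono q f g (le_max_left _ _) hma)
          (Wpow_mono q f g (le_max_right _ _) hmb)
  obtain ⟨s, hs⟩ := (Submodule.fg_iff_finiteDimensional V).2 hV
  choose μ hμ using hall
  refine ⟨s.sup μ, ?_⟩
  rw [← hs, span_le]
  intro v hv
  exact Wpow_mono q f g (Finset.le_sup hv) (hμ v)

theorem pow_le_pow_base {A B : Submodule F (QGHA F q f g)} (hAB : A ≤ B) (n : ℕ) :
    A ^ n ≤ B ^ n := by
  induction n with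
  | zero => simp
  | succ n ih => rw [pow_succ, pow_succ]; exact mul_le_mul' ih hAB

end QGHA
namespace QGHAAux

open Filter Real

theorem tendsto_logb_poly (C : ℝ) (hC : 0 < C) (e : ℕ) :
    Tendsto (fun n : ℕ => Real.logb n (C * (n:ℝ)^e)) atTop (nhds (e : ℝ)) := by
  have h1 : ∀ᶠ n : ℕ in atTop, (e : ℝ) + Real.log C / Real.log n
      = Real.logb n (C * (n:ℝ)^e) := by
    filter_upwards [eventually_ge_atTop 2] with n hn
    have hn1 : (1:ℝ) < (n:ℝ) := by exact_mod_cast Nat.lt_of_lt_of_le Nat.one_lt_two hn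
    have hnpos : (0:ℝ) < (n:ℝ) := by linarith
    have hlog : Real.log n ≠ 0 := ne_of_gt (Real.log_pos hn1)
    rw [Real.logb, Real.log_mul (ne_of_gt hC) (pow_ne_zero _ (ne_of_gt hnpos)),
      Real.log_pow, add_div, mul_div_assoc, div_self hlog, mul_one, add_comm]
  have h2 : Tendsto (fun n : ℕ => Real.log C / Real.log n) atTop (nhds 0) :=
    Tendsto.div_atTop tendsto_const_nhds
      (Real.tendsto_log_atTop.comp tendsto_natCast_atTop_atTop)
  have h3 : Tendsto (fun n : ℕ => (e : ℝ) + Real.log C / Real.log n) atTop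
      (nhds ((e : ℝ) + 0)) := Tendsto.const_add _ h2
  rw [add_zero] at h3
  exact Tendsto.congr' h1 h3

theorem tendsto_ofReal_logb (C : ℝ) (hC : 0 < C) (e : ℕ) :
    Tendsto (fun n : ℕ => ENNReal.ofReal (Real.logb n (C * (n:ℝ)^e))) atTop
      (nhds (e : ENNReal)) := by
  have := (ENNReal.continuous_ofReal.tendsto (e:ℝ)).comp (tendsto_logb_poly C hC e)
  simpa [Function.comp_def, ENNReal.ofReal_natCast] using this

theorem limsup_le_of_poly_bound (d : ℕ → ℕ) (C : ℝ) (hC : 1 ≤ C) (e : ℕ)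
    (hd : ∀ n : ℕ, 1 ≤ n → (d n : ℝ) ≤ C * (n:ℝ)^e) :
    Filter.limsup (fun n : ℕ => ENNReal.ofReal (Real.logb n (d n))) atTop
      ≤ (e : ENNReal) := by
  have hcmp : ∀ᶠ n : ℕ in atTop,
      ENNReal.ofReal (Real.logb n (d n))
        ≤ ENNReal.ofReal (Real.logb n (C * (n:ℝ)^e)) := by
    filter_upwards [eventually_ge_atTop 2] with n hn
    rcases Nat.eq_zero_or_pos (d n) with h0 | hpos
    · simp only [h0, Nat.cast_zero, Real.logb_zero, ENNReal.ofReal_zero]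
      exact zero_le
    · apply ENNReal.ofReal_le_ofReal
      have hn1 : (1:ℝ) < (n:ℝ) := by exact_mod_cast Nat.lt_of_lt_of_le Nat.one_lt_two hn
      exact Real.logb_le_logb_of_le hn1 (by exact_mod_cast hpos) (hd n (by omega))
  refine le_trans (limsup_le_limsup hcmp) ?_
  exact le_of_eq (tendsto_ofReal_logb C (by linarith) e).limsup_eq

theorem le_limsup_of_poly_bound (d : ℕ → ℕ) (A : ℝ) (hA : 1 ≤ A) (e : ℕ) (N : ℕ)
    (hd : ∀ n : ℕ, N ≤ n → ((n:ℝ)/A)^e ≤ (d n : ℝ)) :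
    (e : ENNReal)
      ≤ Filter.limsup (fun n : ℕ => ENNReal.ofReal (Real.logb n (d n))) atTop := by
  have hApos : (0:ℝ) < A := by linarith
  have hcmp : ∀ᶠ n : ℕ in atTop,
      ENNReal.ofReal (Real.logb n ((1/A)^e * (n:ℝ)^e))
        ≤ ENNReal.ofReal (Real.logb n (d n)) := by
    filter_upwards [eventually_ge_atTop (max N 2)] with n hn
    have hN : N ≤ n := le_trans (le_max_left _ _) hn
    have h2 : (2:ℕ) ≤ n := le_trans (le_max_right _ _) hn
    have hn1 : (1:ℝ) < (n:ℝ) := by exact_mod_cast Nat.lt_of_lt_of_le Nat.one_lt_two h2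
    have hnpos : (0:ℝ) < (n:ℝ) := by linarith
    have hx : (0:ℝ) < (1/A)^e * (n:ℝ)^e := by positivity
    apply ENNReal.ofReal_le_ofReal
    apply Real.logb_le_logb_of_le hn1 hx
    calc (1/A)^e * (n:ℝ)^e = ((n:ℝ)/A)^e := by rw [← mul_pow]; ring_nf
    _ ≤ (d n : ℝ) := hd n hN
  refine le_trans ?_ (limsup_le_limsup hcmp)
  exact le_of_eq (tendsto_ofReal_logb ((1/A)^e) (by positivity) e).limsup_eq.symm

end QGHAAux
namespace QGHA

variable {F : Type*} [Field F] (q : F) (f g : F[X])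

open QGHAAux Filter Submodule Module

theorem gk_term_le3 (hf : f.natDegree ≤ 1) (V : Submodule F (QGHA F q f g))
    (hV : FiniteDimensional F V) :
    Filter.limsup
      (fun n : ℕ => ENNReal.ofReal (Real.logb n (finrank F ↥(V ^ n)))) atTop
      ≤ (3 : ENNReal) := by
  obtain ⟨m, hm⟩ := exists_le_Wpow q f g V hV
  set c := g.natDegree + 1 with hc
  set Cn : ℕ := (m+1) * ((c*m+1) * (m+1)) with hCn
  have hCpos : 0 < Cn := by rw [hCn]; positivity
  have hnum : ∀ n : ℕ, 1 ≤ n → finrank F ↥(V^n) ≤ Cn * n^3 := by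
    intro n hn
    have h1 : V^n ≤ Wgen q f g ^ (m*n) := by
      refine le_trans (pow_le_pow_base q f g hm n) ?_
      rw [pow_mul]
    have h2 : V^n ≤ Uspan q f g (m*n) (c*(m*n)) :=
      le_trans h1 (Wpow_le_Uspan q f g hf (m*n))
    refine le_trans (finrank_le_of_le_Uspan q f g h2) ?_
    have e1 : m*n+1 ≤ (m+1)*n := by nlinarith
    have e2 : c*(m*n)+1 ≤ (c*m+1)*n := by nlinarith
    calc (m*n+1) * ((c*(m*n)+1) * (m*n+1))
        ≤ ((m+1)*n) * (((c*m+1)*n) * ((m+1)*n)) :=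
          Nat.mul_le_mul e1 (Nat.mul_le_mul e2 e1)
    _ = Cn * n^3 := by rw [hCn]; ring
  have hbound : ∀ n : ℕ, 1 ≤ n →
      ((finrank F ↥(V^n) : ℕ) : ℝ) ≤ (Cn : ℝ) * (n:ℝ)^3 := by
    intro n hn
    have := hnum n hn
    push_cast
    exact_mod_cast this
  have := limsup_le_of_poly_bound (fun n => finrank F ↥(V^n)) (Cn : ℝ)
    (by exact_mod_cast hCpos) 3 hbound
  simpa using this

theorem gk_term_W_ge3 :
    (3 : ENNReal) ≤ Filter.limsup
      (fun n : ℕ => ENNReal.ofReal (Real.logb n (finrank F ↥(Wgen q f g ^ n)))) atTop := by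
  have key : ∀ n : ℕ, 1 ≤ n →
      ((n:ℝ)/3)^3 ≤ ((finrank F ↥(Wgen q f g ^ n) : ℕ) : ℝ) := by
    intro n _
    have h1 := finrank_Wpow_lower1 q f g n
    have hn3 : n ≤ 3*((n/3)+1) := by omega
    have h2 : ((n:ℝ)/3) ≤ (((n/3 + 1 : ℕ)) : ℝ) := by
      have : (n:ℝ) ≤ 3*(((n/3 + 1 : ℕ)) : ℝ) := by exact_mod_cast hn3
      linarith
    calc ((n:ℝ)/3)^3 ≤ (((n/3 + 1 : ℕ)) : ℝ)^3 :=
      pow_le_pow_left₀ (by positivity) h2 3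
    _ ≤ _ := by exact_mod_cast h1
  have := le_limsup_of_poly_bound (fun n => finrank F ↥(Wgen q f g ^ n)) 3
    (by norm_num) 3 1 key
  simpa using this

theorem gk_term_W_ge4 (hd : 2 ≤ f.natDegree) :
    (4 : ENNReal) ≤ Filter.limsup
      (fun n : ℕ => ENNReal.ofReal (Real.logb n (finrank F ↥(Wgen q f g ^ n)))) atTop := by
  have key : ∀ n : ℕ, 14 ≤ n →
      ((n:ℝ)/16)^4 ≤ ((finrank F ↥(Wgen q f g ^ n) : ℕ) : ℝ) := by
    intro n hn
    have h1 := finrank_Wpow_lower2 q f g hd n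
    have hn16 : n ≤ 16*(n/8) := by omega
    have h2 : ((n:ℝ)/16) ≤ (((n/8 : ℕ)) : ℝ) := by
      have : (n:ℝ) ≤ 16*(((n/8 : ℕ)) : ℝ) := by exact_mod_cast hn16
      linarith
    calc ((n:ℝ)/16)^4 ≤ (((n/8 : ℕ)) : ℝ)^4 :=
      pow_le_pow_left₀ (by positivity) h2 4
    _ ≤ _ := by exact_mod_cast h1
  have := le_limsup_of_poly_bound (fun n => finrank F ↥(Wgen q f g ^ n)) 16
    (by norm_num) 4 14 key
  simpa using this

instance : FiniteDimensional F ↥(Wgen q f g) :=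
  FiniteDimensional.span_of_finite F
    ((((Set.finite_singleton _).insert _).insert _).insert _)

theorem gkdim_eq_three (hf : f.natDegree ≤ 1) : GKdim F (QGHA F q f g) = 3 := by
  rw [GKdim]
  apply le_antisymm
  · exact iSup_le fun V => iSup_le fun hV => gk_term_le3 q f g hf V hV
  · refine le_trans (gk_term_W_ge3 q f g) ?_
    refine le_trans (le_iSup (fun _ : FiniteDimensional F ↥(Wgen q f g) =>
      Filter.limsup (fun n : ℕ =>
        ENNReal.ofReal (Real.logb n (finrank F ↥(Wgen q f g ^ n)))) atTop)
      inferInstance) ?_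
    exact le_iSup (fun V : Submodule F (QGHA F q f g) =>
      ⨆ (_ : FiniteDimensional F ↥V), Filter.limsup
        (fun n : ℕ => ENNReal.ofReal (Real.logb n (finrank F ↥(V ^ n)))) atTop)
      (Wgen q f g)

theorem gkdim_ge_four (hd : 2 ≤ f.natDegree) : 4 ≤ GKdim F (QGHA F q f g) := by
  rw [GKdim]
  refine le_trans (gk_term_W_ge4 q f g hd) ?_
  refine le_trans (le_iSup (fun _ : FiniteDimensional F ↥(Wgen q f g) =>
    Filter.limsup (fun n : ℕ =>
      ENNReal.ofReal (Real.logb n (finrank F ↥(Wgen q f g ^ n)))) atTop)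
    inferInstance) ?_
  exact le_iSup (fun V : Submodule F (QGHA F q f g) =>
    ⨆ (_ : FiniteDimensional F ↥V), Filter.limsup
      (fun n : ℕ => ENNReal.ofReal (Real.logb n (finrank F ↥(V ^ n)))) atTop)
    (Wgen q f g)

end QGHA
/-- `GKdim H_q(f,g) = 3` if and only if `deg f ≤ 1`; and if `deg f > 1`
then `GKdim H_q(f,g) ≥ 4`. -/
theorem qgha_GKdim {F : Type*} [Field F] (q : F) (f g : F[X]) :
    (GKdim F (QGHA F q f g) = 3 ↔ f.degree ≤ 1) ∧
    (1 < f.degree → 4 ≤ GKdim F (QGHA F q f g)) := by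
  have hdeg_iff := (Polynomial.natDegree_le_iff_degree_le (p := f) (n := 1))
  rw [Nat.cast_one] at hdeg_iff
  constructor
  · constructor
    · intro hgk
      by_contra hdeg
      have h2 : 2 ≤ f.natDegree := by
        have : ¬ f.natDegree ≤ 1 := fun hle => hdeg (hdeg_iff.mp hle)
        omega
      have h4 := QGHA.gkdim_ge_four q f g h2
      rw [hgk] at h4
      exact absurd h4 (by norm_num)
    · intro hdeg
      exact QGHA.gkdim_eq_three q f g (hdeg_iff.mpr hdeg)
  · intro hdeg
    have h2 : 2 ≤ f.natDegree := by
      by_contra hle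
      have h1 : f.natDegree ≤ 1 := by omega
      exact absurd (hdeg_iff.mp h1) (not_le.mpr hdeg)
    exact QGHA.gkdim_ge_four q f g h2
end

section
/- Let F be a field, q ∈ F and f, g ∈ F[h]. Then the quantum generalized Heisenberg algebra H_q(f,g) is isomorphic as an F-algebra to some generalized down-up algebra L(v,r,s,γ) if and only if deg f ≤ 1. -/
open Polynomial

/-- The three generators `d`, `u`, `h` of a generalized down-up algebra. -/
inductive GDUAGen : Type
  | d : GDUAGen
  | u : GDUAGen
  | h : GDUAGen

/-- The defining relations of the generalized down-up algebra `L(v,r,s,γ)`: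
`d*h - r*(h*d) + γ*d = 0`, `h*u - r*(u*h) + γ*u = 0`, and `d*u - s*(u*d) + v(h) = 0`. -/
inductive GDUARel (F : Type*) [Field F] (v : Polynomial F) (r s γ : F) :
    FreeAlgebra F GDUAGen → FreeAlgebra F GDUAGen → Prop
  | dh : GDUARel F v r s γ
      (FreeAlgebra.ι F GDUAGen.d * FreeAlgebra.ι F GDUAGen.h)
      (r • (FreeAlgebra.ι F GDUAGen.h * FreeAlgebra.ι F GDUAGen.d)
        - γ • FreeAlgebra.ι F GDUAGen.d)
  | hu : GDUARel F v r s γ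
      (FreeAlgebra.ι F GDUAGen.h * FreeAlgebra.ι F GDUAGen.u)
      (r • (FreeAlgebra.ι F GDUAGen.u * FreeAlgebra.ι F GDUAGen.h)
        - γ • FreeAlgebra.ι F GDUAGen.u)
  | du : GDUARel F v r s γ
      (FreeAlgebra.ι F GDUAGen.d * FreeAlgebra.ι F GDUAGen.u)
      (s • (FreeAlgebra.ι F GDUAGen.u * FreeAlgebra.ι F GDUAGen.d)
        - Polynomial.aeval (FreeAlgebra.ι F GDUAGen.h) v)

/-- The generalized down-up algebra `L(v,r,s,γ)`. -/
def GDUA (F : Type*) [Field F] (v : Polynomial F) (r s γ : F) : Type _ :=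
  RingQuot (GDUARel F v r s γ)

instance {F : Type*} [Field F] (v : Polynomial F) (r s γ : F) : Ring (GDUA F v r s γ) :=
  inferInstanceAs (Ring (RingQuot (GDUARel F v r s γ)))

instance {F : Type*} [Field F] (v : Polynomial F) (r s γ : F) : Algebra F (GDUA F v r s γ) :=
  inferInstanceAs (Algebra F (RingQuot (GDUARel F v r s γ)))


open Polynomial

/-- Nonzero polynomials with pairwise distinct `natDegree` are linearly independent. -/
lemma linearIndependent_of_natDegree_injective {F : Type*} [Field F] {ι : Type*}
    (p : ι → F[X]) (h0 : ∀ i, p i ≠ 0) (hinj : Function.Injective fun i => (p i).natDegree) :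
    LinearIndependent F p := by
  classical
  rw [linearIndependent_iff']
  intro t c hc i hi
  by_contra hci
  set tne := t.filter (fun j => c j ≠ 0) with htne
  have htne_ne : tne.Nonempty := ⟨i, Finset.mem_filter.2 ⟨hi, hci⟩⟩
  obtain ⟨i0, hi0mem, hi0max⟩ := tne.exists_max_image (fun j => (p j).natDegree) htne_ne
  have hci0 : c i0 ≠ 0 := (Finset.mem_filter.1 hi0mem).2
  set D := (p i0).natDegree with hD
  have hcoeff : (∑ j ∈ t, c j • p j).coeff D = c i0 * (p i0).leadingCoeff := by
    rw [Polynomial.finset_sum_coeff]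
    rw [Finset.sum_eq_single i0]
    · rw [Polynomial.coeff_smul, smul_eq_mul, Polynomial.leadingCoeff]
    · intro j hj hji0
      rcases eq_or_ne (c j) 0 with h | h
      · simp [h]
      · have hjne : j ∈ tne := Finset.mem_filter.2 ⟨hj, h⟩
        have hlt : (p j).natDegree < D := by
          refine lt_of_le_of_ne (hi0max j hjne) ?_
          exact fun hEq => hji0 (hinj hEq)
        simp [Polynomial.coeff_smul, Polynomial.coeff_eq_zero_of_natDegree_lt hlt]
    · intro h; exact absurd (Finset.mem_filter.1 hi0mem).1 h
  rw [hc] at hcoeff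
  simp only [Polynomial.coeff_zero] at hcoeff
  have hl := Polynomial.leadingCoeff_ne_zero.2 (h0 i0)
  rcases mul_eq_zero.1 hcoeff.symm with h | h
  · exact hci0 h
  · exact hl h

/-- `A ↦ ∑ i in A, d ^ i` is injective on finsets when `2 ≤ d`. -/
lemma sum_pow_injective {d : ℕ} (hd : 2 ≤ d) :
    Function.Injective (fun A : Finset ℕ => ∑ i ∈ A, d ^ i) := by
  have key : ∀ n (A B : Finset ℕ), A ⊆ Finset.range n → B ⊆ Finset.range n →
      (∑ i ∈ A, d ^ i) = (∑ i ∈ B, d ^ i) → A = B := by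
    intro n
    induction n with
    | zero =>
      intro A B hA hB _
      simp only [Finset.range_zero, Finset.subset_empty] at hA hB
      rw [hA, hB]
    | succ n ih =>
      intro A B hA hB hsum
      have hbound : ∀ C : Finset ℕ, C ⊆ Finset.range n → (∑ i ∈ C, d ^ i) < d ^ n := by
        intro C hC
        calc (∑ i ∈ C, d ^ i) ≤ ∑ i ∈ Finset.range n, d ^ i := Finset.sum_le_sum_of_subset hC
          _ < d ^ n := Nat.geomSum_lt hd (by simp)
      have main : ∀ A B : Finset ℕ, A ⊆ Finset.range (n+1) → B ⊆ Finset.range (n+1) →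
          (∑ i ∈ A, d ^ i) = (∑ i ∈ B, d ^ i) → n ∈ A → n ∉ B → False := by
        intro A B hA hB hsum hnA hnB
        have hBle : (∑ i ∈ B, d ^ i) < d ^ n := by
          apply hbound
          intro x hx
          have := hB hx
          simp only [Finset.mem_range] at this ⊢
          rcases Nat.lt_succ_iff_lt_or_eq.1 this with h | h
          · exact h
          · exact absurd (h ▸ hx) hnB
        have hAge : d ^ n ≤ ∑ i ∈ A, d ^ i := Finset.single_le_sum (fun i _ => Nat.zero_le _) hnA
        omega
      have hmem : (n ∈ A) ↔ (n ∈ B) := by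
        constructor
        · intro hnA
          by_contra hnB
          exact main A B hA hB hsum hnA hnB
        · intro hnB
          by_contra hnA
          exact main B A hB hA hsum.symm hnB hnA
      have hA' : A.erase n ⊆ Finset.range n := by
        intro x hx
        have hxA := Finset.mem_of_mem_erase hx
        have h1 := hA hxA
        simp only [Finset.mem_range] at h1 ⊢
        have := Finset.ne_of_mem_erase hx
        omega
      have hB' : B.erase n ⊆ Finset.range n := by
        intro x hx
        have hxB := Finset.mem_of_mem_erase hx
        have h1 := hB hxB
        simp only [Finset.mem_range] at h1 ⊢
        have := Finset.ne_of_mem_erase hx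
        omega
      by_cases hn : n ∈ A
      · have hnB : n ∈ B := hmem.1 hn
        have hsum' : (∑ i ∈ A.erase n, d ^ i) = ∑ i ∈ B.erase n, d ^ i := by
          have h1 : d ^ n + ∑ i ∈ A.erase n, d ^ i = ∑ i ∈ A, d ^ i :=
            Finset.add_sum_erase _ (fun i => d ^ i) hn
          have h2 : d ^ n + ∑ i ∈ B.erase n, d ^ i = ∑ i ∈ B, d ^ i :=
            Finset.add_sum_erase _ (fun i => d ^ i) hnB
          omega
        have heq := ih _ _ hA' hB' hsum'
        have hA2 : A = insert n (A.erase n) := (Finset.insert_erase hn).symm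
        have hB2 : B = insert n (B.erase n) := (Finset.insert_erase hnB).symm
        rw [hA2, hB2, heq]
      · have hnB : n ∉ B := fun hc => hn (hmem.2 hc)
        have hA2 : A.erase n = A := Finset.erase_eq_of_notMem hn
        have hB2 : B.erase n = B := Finset.erase_eq_of_notMem hnB
        exact ih _ _ (hA2 ▸ hA') (hB2 ▸ hB') hsum
  intro A B hsum
  obtain ⟨n, hn1, hn2⟩ : ∃ n, A ⊆ Finset.range n ∧ B ⊆ Finset.range n := by
    rcases (A ∪ B).exists_nat_subset_range with ⟨n, hn⟩
    exact ⟨n, (Finset.subset_union_left).trans hn, (Finset.subset_union_right).trans hn⟩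
  exact key n A B hn1 hn2 hsum

/-- polynomial growth is eventually beaten by `2 ^ n`. -/
lemma exists_pow_lt_two_pow (a : ℕ) : ∃ k : ℕ, a * (k + 1) ^ 3 < 2 ^ (k + 1) := by
  have h4 : ∀ n : ℕ, 16 ≤ n → n ^ 4 ≤ 2 ^ n := by
    intro n hn
    induction n with
    | zero => omega
    | succ m ih =>
      rcases Nat.lt_or_ge m 16 with h | h
      · have hm : m = 15 := by omega
        subst hm
        norm_num
      · have ihm := ih (by omega)
        have step : (m + 1) ^ 4 ≤ 2 * m ^ 4 := by
          have h16 : 16 * m ^ 3 ≤ m * m ^ 3 := Nat.mul_le_mul_right _ h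
          nlinarith [h16, Nat.zero_le m]
        have h2m : 2 * 2 ^ m = 2 ^ (m + 1) := by rw [pow_succ]; ring
        omega
  refine ⟨a + 16, ?_⟩
  show a * (a + 17) ^ 3 < 2 ^ (a + 17)
  have h2 : (a + 17) ^ 4 ≤ 2 ^ (a + 17) := h4 _ (by omega)
  have hp : (0:ℕ) < (a+17)^3 := pow_pos (by omega) 3
  have h3 : a * (a + 17) ^ 3 < (a + 17) * (a + 17) ^ 3 :=
    mul_lt_mul_of_pos_right (by omega) hp
  have h5 : (a + 17) * (a + 17) ^ 3 = (a + 17) ^ 4 := by ring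
  omega
namespace QGHAProof

variable {F : Type*} [Field F]

section Lgens

variable (v : F[X]) (r s γ : F)

/-- The generator `d` of `L(v,r,s,γ)`. -/
noncomputable def dL : GDUA F v r s γ :=
  RingQuot.mkAlgHom F (GDUARel F v r s γ) (FreeAlgebra.ι F GDUAGen.d)

/-- The generator `u` of `L(v,r,s,γ)`. -/
noncomputable def uL : GDUA F v r s γ :=
  RingQuot.mkAlgHom F (GDUARel F v r s γ) (FreeAlgebra.ι F GDUAGen.u)

/-- The generator `h` of `L(v,r,s,γ)`. -/
noncomputable def hL : GDUA F v r s γ :=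
  RingQuot.mkAlgHom F (GDUARel F v r s γ) (FreeAlgebra.ι F GDUAGen.h)

lemma L_rel_dh : dL v r s γ * hL v r s γ = r • (hL v r s γ * dL v r s γ) - γ • dL v r s γ := by
  have h := RingQuot.mkAlgHom_rel F (GDUARel.dh : GDUARel F v r s γ _ _)
  simp only [map_mul, map_sub, map_smul] at h
  exact h

lemma L_rel_hu : hL v r s γ * uL v r s γ = r • (uL v r s γ * hL v r s γ) - γ • uL v r s γ := by
  have h := RingQuot.mkAlgHom_rel F (GDUARel.hu : GDUARel F v r s γ _ _)
  simp only [map_mul, map_sub, map_smul] at h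
  exact h

lemma L_rel_du : dL v r s γ * uL v r s γ =
    s • (uL v r s γ * dL v r s γ) - aeval (hL v r s γ) v := by
  have h := RingQuot.mkAlgHom_rel F (GDUARel.du : GDUARel F v r s γ _ _)
  have ha : (RingQuot.mkAlgHom F (GDUARel F v r s γ)) (aeval (FreeAlgebra.ι F GDUAGen.h) v) =
      aeval (hL v r s γ) v := (Polynomial.aeval_algHom_apply (RingQuot.mkAlgHom F (GDUARel F v r s γ)) _ _).symm
  simp only [map_mul, map_sub, map_smul, ha] at h
  exact h

end Lgens

section Hrels

variable (q : F) (f g : F[X])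

lemma H_rel_hx : QGHA.h q f g * QGHA.x q f g = QGHA.x q f g * aeval (QGHA.h q f g) f := by
  have h := RingQuot.mkAlgHom_rel F (QGHARel.hx : QGHARel F q f g _ _)
  have ha : (RingQuot.mkAlgHom F (QGHARel F q f g)) (aeval (FreeAlgebra.ι F QGHAGen.h) f) =
      aeval (QGHA.h q f g) f := (Polynomial.aeval_algHom_apply (RingQuot.mkAlgHom F (QGHARel F q f g)) _ _).symm
  simp only [map_mul, ha] at h
  exact h

lemma H_rel_yh : QGHA.y q f g * QGHA.h q f g = aeval (QGHA.h q f g) f * QGHA.y q f g := by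
  have h := RingQuot.mkAlgHom_rel F (QGHARel.yh : QGHARel F q f g _ _)
  have ha : (RingQuot.mkAlgHom F (QGHARel F q f g)) (aeval (FreeAlgebra.ι F QGHAGen.h) f) =
      aeval (QGHA.h q f g) f := (Polynomial.aeval_algHom_apply (RingQuot.mkAlgHom F (QGHARel F q f g)) _ _).symm
  simp only [map_mul, ha] at h
  exact h

lemma H_rel_yx : QGHA.y q f g * QGHA.x q f g =
    q • (QGHA.x q f g * QGHA.y q f g) + aeval (QGHA.h q f g) g := by
  have h := RingQuot.mkAlgHom_rel F (QGHARel.yx : QGHARel F q f g _ _)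
  have ha : (RingQuot.mkAlgHom F (QGHARel F q f g)) (aeval (FreeAlgebra.ι F QGHAGen.h) g) =
      aeval (QGHA.h q f g) g := (Polynomial.aeval_algHom_apply (RingQuot.mkAlgHom F (QGHARel F q f g)) _ _).symm
  simp only [map_mul, map_add, map_smul, ha] at h
  exact h

end Hrels

lemma aeval_linear {A : Type*} [Ring A] [Algebra F A] (z : A) (a b : F) :
    aeval z (C a * X + C b : F[X]) = a • z + b • (1 : A) := by
  simp [Algebra.smul_def]

section Easy

variable (q : F) (f g : F[X]) (a b : F)

/-- Forward map `H_q(f,g) → L(-g, a, q, -b)` when `f = aX + b`. -/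
noncomputable def toL (hf : f = C a * X + C b) :
    QGHA F q f g →ₐ[F] GDUA F (-g) a q (-b) :=
  RingQuot.liftAlgHom F ⟨FreeAlgebra.lift F (fun t => match t with
    | QGHAGen.x => uL (-g) a q (-b)
    | QGHAGen.y => dL (-g) a q (-b)
    | QGHAGen.h => hL (-g) a q (-b)), by
      intro p p' hrel
      induction hrel with
      | hx =>
        rw [map_mul, map_mul, ← Polynomial.aeval_algHom_apply]
        simp only [FreeAlgebra.lift_ι_apply]
        rw [hf, aeval_linear, L_rel_hu, mul_add, mul_smul_comm, mul_smul_comm, mul_one]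
        rw [neg_smul, sub_neg_eq_add]
      | yh =>
        rw [map_mul, map_mul, ← Polynomial.aeval_algHom_apply]
        simp only [FreeAlgebra.lift_ι_apply]
        rw [hf, aeval_linear, L_rel_dh, add_mul, smul_mul_assoc, smul_mul_assoc, one_mul]
        rw [neg_smul, sub_neg_eq_add]
      | yx =>
        rw [map_mul, map_add, map_smul, map_mul, ← Polynomial.aeval_algHom_apply]
        simp only [FreeAlgebra.lift_ι_apply]
        rw [L_rel_du, map_neg, sub_neg_eq_add]⟩

/-- Backward map `L(-g, a, q, -b) → H_q(f,g)` when `f = aX + b`. -/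
noncomputable def toH (hf : f = C a * X + C b) :
    GDUA F (-g) a q (-b) →ₐ[F] QGHA F q f g :=
  RingQuot.liftAlgHom F ⟨FreeAlgebra.lift F (fun t => match t with
    | GDUAGen.d => QGHA.y q f g
    | GDUAGen.u => QGHA.x q f g
    | GDUAGen.h => QGHA.h q f g), by
      intro p p' hrel
      induction hrel with
      | dh =>
        rw [map_mul, map_sub, map_smul, map_smul, map_mul]
        simp only [FreeAlgebra.lift_ι_apply]
        rw [H_rel_yh, hf, aeval_linear, add_mul, smul_mul_assoc, smul_mul_assoc, one_mul]
        rw [neg_smul, sub_neg_eq_add]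
      | hu =>
        rw [map_mul, map_sub, map_smul, map_smul, map_mul]
        simp only [FreeAlgebra.lift_ι_apply]
        rw [H_rel_hx, hf, aeval_linear, mul_add, mul_smul_comm, mul_smul_comm, mul_one]
        rw [neg_smul, sub_neg_eq_add]
      | du =>
        rw [map_mul, map_sub, map_smul, map_mul, ← Polynomial.aeval_algHom_apply]
        simp only [FreeAlgebra.lift_ι_apply]
        rw [H_rel_yx, map_neg, sub_neg_eq_add]⟩

lemma toL_mk (hf : f = C a * X + C b) (t : QGHAGen) :
    toL q f g a b hf (RingQuot.mkAlgHom F (QGHARel F q f g) (FreeAlgebra.ι F t)) =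
      (match t with
      | QGHAGen.x => uL (-g) a q (-b)
      | QGHAGen.y => dL (-g) a q (-b)
      | QGHAGen.h => hL (-g) a q (-b)) := by
  rw [toL]
  exact (RingQuot.liftAlgHom_mkAlgHom_apply _ _ _ _).trans (FreeAlgebra.lift_ι_apply _ _)

lemma toH_mk (hf : f = C a * X + C b) (t : GDUAGen) :
    toH q f g a b hf (RingQuot.mkAlgHom F (GDUARel F (-g) a q (-b)) (FreeAlgebra.ι F t)) =
      (match t with
      | GDUAGen.d => QGHA.y q f g
      | GDUAGen.u => QGHA.x q f g
      | GDUAGen.h => QGHA.h q f g) := by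
  rw [toH]
  exact (RingQuot.liftAlgHom_mkAlgHom_apply _ _ _ _).trans (FreeAlgebra.lift_ι_apply _ _)

/-- The easy direction: if `deg f ≤ 1` then `H_q(f,g)` is a GDUA. -/
lemma easy_direction (hdeg : f.degree ≤ 1) :
    ∃ (v : F[X]) (r s γ : F), Nonempty (QGHA F q f g ≃ₐ[F] GDUA F v r s γ) := by
  have hf : f = C (f.coeff 1) * X + C (f.coeff 0) := eq_X_add_C_of_degree_le_one hdeg
  refine ⟨-g, f.coeff 1, q, -(f.coeff 0), ⟨AlgEquiv.ofAlgHom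
    (toL q f g _ _ hf) (toH q f g _ _ hf) ?_ ?_⟩⟩
  · apply RingQuot.ringQuot_ext'
    apply FreeAlgebra.hom_ext
    funext t
    change toL q f g _ _ hf (toH q f g _ _ hf (RingQuot.mkAlgHom F _ (FreeAlgebra.ι F t))) =
      RingQuot.mkAlgHom F _ (FreeAlgebra.ι F t)
    cases t <;> rw [toH_mk] <;> exact toL_mk q f g _ _ hf _
  · apply RingQuot.ringQuot_ext'
    apply FreeAlgebra.hom_ext
    funext t
    change toH q f g _ _ hf (toL q f g _ _ hf (RingQuot.mkAlgHom F _ (FreeAlgebra.ι F t))) =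
      RingQuot.mkAlgHom F _ (FreeAlgebra.ι F t)
    cases t <;> rw [toL_mk] <;> exact toH_mk q f g _ _ hf _

end Easy

end QGHAProof
namespace QGHAProof

section Module

variable {F : Type*} [Field F] (q : F) (f g : F[X])

/-- Iterated composition `f^{∘i}` starting from `X`. -/
noncomputable def iterComp : ℕ → F[X]
  | 0 => X
  | (i+1) => (iterComp i).comp f

lemma comp_iterComp (i : ℕ) : f.comp (iterComp f i) = iterComp f (i+1) := by
  induction i with
  | zero => simp [iterComp]
  | succ j ih =>
    show f.comp ((iterComp f j).comp f) = (iterComp f (j+1)).comp f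
    rw [← Polynomial.comp_assoc, ih]

/-- Coefficients for the `y`-action. -/
noncomputable def ycoef : ℕ → F[X]
  | 0 => 0
  | (i+1) => g.comp (iterComp f i) + q • ycoef i

/-- The module `V = ⊕ₙ F[t]`. -/
abbrev VMod (F : Type*) [Field F] := ℕ →₀ F[X]

/-- Action of `x`: shift. -/
noncomputable def Xop : VMod F →ₗ[F] VMod F :=
  Finsupp.lsum F fun i => Finsupp.lsingle (i+1)

/-- Action of `h`: multiplication by `f^{∘i}` in degree `i`. -/
noncomputable def Hop : VMod F →ₗ[F] VMod F :=
  Finsupp.lsum F fun i => (Finsupp.lsingle i).comp (LinearMap.mulLeft F (iterComp f i))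

/-- Action of `y`. -/
noncomputable def Yop : VMod F →ₗ[F] VMod F :=
  Finsupp.lsum F fun i => (Finsupp.lsingle (i-1)).comp (LinearMap.mulLeft F (ycoef q f g i))

lemma Xop_single (i : ℕ) (p : F[X]) :
    Xop (Finsupp.single i p : VMod F) = Finsupp.single (i+1) p := by
  simp [Xop]

lemma Hop_single (i : ℕ) (p : F[X]) :
    Hop f (Finsupp.single i p : VMod F) = Finsupp.single i (iterComp f i * p) := by
  simp [Hop]

lemma Yop_single (i : ℕ) (p : F[X]) :
    Yop q f g (Finsupp.single i p : VMod F) = Finsupp.single (i-1) (ycoef q f g i * p) := by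
  simp [Yop]

lemma aeval_Hop_single (P : F[X]) (i : ℕ) (p : F[X]) :
    (aeval (Hop f) P : Module.End F (VMod F)) (Finsupp.single i p) =
      Finsupp.single i (P.comp (iterComp f i) * p) := by
  induction P using Polynomial.induction_on generalizing p with
  | C a =>
    rw [aeval_C, Module.algebraMap_end_apply, Finsupp.smul_single, Polynomial.C_comp,
      Polynomial.smul_eq_C_mul]
  | add P Q hP hQ =>
    rw [map_add, LinearMap.add_apply, hP, hQ, ← Finsupp.single_add, Polynomial.add_comp,
      add_mul]
  | monomial n a ih =>
    have hrw : (C a * X ^ (n + 1) : F[X]) = (C a * X ^ n) * X := by ring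
    rw [hrw, map_mul, aeval_X, Module.End.mul_apply, Hop_single, ih]
    congr 1
    simp only [Polynomial.mul_comp, Polynomial.X_comp]
    ring

lemma relX : Hop f * Xop = Xop * (aeval (Hop f) f : Module.End F (VMod F)) := by
  apply Finsupp.lhom_ext
  intro i p
  rw [Module.End.mul_apply, Module.End.mul_apply, Xop_single, Hop_single, aeval_Hop_single,
    Xop_single, comp_iterComp]

lemma relY : Yop q f g * Hop f = (aeval (Hop f) f : Module.End F (VMod F)) * Yop q f g := by
  apply Finsupp.lhom_ext
  intro i p
  rw [Module.End.mul_apply, Module.End.mul_apply, Hop_single, Yop_single, Yop_single,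
    aeval_Hop_single]
  cases i with
  | zero => simp [ycoef]
  | succ j =>
    simp only [Nat.add_sub_cancel]
    rw [comp_iterComp]
    congr 1
    ring

lemma relYX : Yop q f g * Xop =
    q • (Xop * Yop q f g) + (aeval (Hop f) g : Module.End F (VMod F)) := by
  apply Finsupp.lhom_ext
  intro i p
  rw [Module.End.mul_apply, LinearMap.add_apply, LinearMap.smul_apply, Module.End.mul_apply,
    Xop_single, Yop_single, Yop_single, aeval_Hop_single]
  cases i with
  | zero => simp [ycoef, Xop_single]
  | succ j =>
    simp only [Nat.add_sub_cancel, Xop_single]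
    rw [Finsupp.smul_single, ← Finsupp.single_add]
    congr 1
    rw [ycoef, add_mul, smul_mul_assoc, add_comm]

/-- The representation of `H_q(f,g)` on `V`. -/
noncomputable def rho : QGHA F q f g →ₐ[F] Module.End F (VMod F) :=
  RingQuot.liftAlgHom F ⟨FreeAlgebra.lift F (fun t => match t with
    | QGHAGen.x => Xop
    | QGHAGen.y => Yop q f g
    | QGHAGen.h => Hop f), by
      intro p p' hrel
      induction hrel with
      | hx =>
        rw [map_mul, map_mul, ← Polynomial.aeval_algHom_apply]
        simp only [FreeAlgebra.lift_ι_apply]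
        exact relX f
      | yh =>
        rw [map_mul, map_mul, ← Polynomial.aeval_algHom_apply]
        simp only [FreeAlgebra.lift_ι_apply]
        exact (relY q f g).symm.symm
      | yx =>
        rw [map_mul, map_add, map_smul, map_mul, ← Polynomial.aeval_algHom_apply]
        simp only [FreeAlgebra.lift_ι_apply]
        exact relYX q f g⟩

lemma rho_x : rho q f g (QGHA.x q f g) = Xop := by
  rw [rho, QGHA.x]
  erw [RingQuot.liftAlgHom_mkAlgHom_apply]
  rw [FreeAlgebra.lift_ι_apply]

lemma rho_y : rho q f g (QGHA.y q f g) = Yop q f g := by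
  rw [rho, QGHA.y]
  erw [RingQuot.liftAlgHom_mkAlgHom_apply]
  rw [FreeAlgebra.lift_ι_apply]

lemma rho_h : rho q f g (QGHA.h q f g) = Hop f := by
  rw [rho, QGHA.h]
  erw [RingQuot.liftAlgHom_mkAlgHom_apply]
  rw [FreeAlgebra.lift_ι_apply]

end Module

end QGHAProof
namespace QGHAProof

section Lower

variable {F : Type*} [Field F] (q : F) (f g : F[X])

/-- The generating subspace of `H_q(f,g)`. -/
noncomputable def Sgen : Submodule F (QGHA F q f g) :=
  Submodule.span F {1, QGHA.x q f g, QGHA.y q f g, QGHA.h q f g}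

/-- The word `h^{a_j} x h^{a_{j-1}} x ⋯ x h^{a_0}` where `a_i = [i ∈ A]`. -/
noncomputable def Wword (A : Finset ℕ) : ℕ → QGHA F q f g
  | 0 => if 0 ∈ A then QGHA.h q f g else 1
  | (j+1) => (if j+1 ∈ A then QGHA.h q f g else 1) * (QGHA.x q f g * Wword A j)

/-- The polynomial produced by acting with `Wword` on the vacuum vector. -/
noncomputable def Qpoly (A : Finset ℕ) : ℕ → F[X]
  | 0 => if 0 ∈ A then X else 1
  | (j+1) => (if j+1 ∈ A then iterComp f (j+1) else 1) * Qpoly A j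

lemma Wword_mem (A : Finset ℕ) (j : ℕ) : Wword q f g A j ∈ (Sgen q f g) ^ (2*j+1) := by
  induction j with
  | zero =>
    rw [pow_one]
    by_cases h0 : 0 ∈ A <;>
      simp only [Wword, h0, if_true, if_false] <;>
      exact Submodule.subset_span (by simp)
  | succ j ih =>
    have hx : QGHA.x q f g ∈ Sgen q f g := Submodule.subset_span (by simp)
    have hhh : (if j+1 ∈ A then QGHA.h q f g else 1) ∈ Sgen q f g := by
      by_cases h0 : j+1 ∈ A <;> simp only [h0, if_true, if_false] <;>
        exact Submodule.subset_span (by simp)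
    have : Wword q f g A (j+1) ∈ Sgen q f g * (Sgen q f g * (Sgen q f g)^(2*j+1)) :=
      Submodule.mul_mem_mul hhh (Submodule.mul_mem_mul hx ih)
    have heq : Sgen q f g * (Sgen q f g * (Sgen q f g)^(2*j+1)) = (Sgen q f g)^(2*(j+1)+1) := by
      rw [← pow_succ', ← pow_succ']
      congr 1
    rwa [heq] at this

lemma rho_Wword (A : Finset ℕ) (j : ℕ) :
    rho q f g (Wword q f g A j) (Finsupp.single 0 1) = Finsupp.single j (Qpoly f A j) := by
  induction j with
  | zero =>
    by_cases h0 : 0 ∈ A <;> simp only [Wword, Qpoly, h0, if_true, if_false]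
    · rw [rho_h, Hop_single]
      simp [iterComp]
    · simp
  | succ j ih =>
    rw [Wword, map_mul, map_mul, Module.End.mul_apply, Module.End.mul_apply, ih, rho_x,
      Xop_single, Qpoly]
    by_cases h0 : j+1 ∈ A <;> simp only [h0, if_true, if_false]
    · rw [rho_h, Hop_single]
    · simp

lemma natDegree_iterComp (i : ℕ) : (iterComp f i).natDegree = f.natDegree ^ i := by
  induction i with
  | zero => simp [iterComp]
  | succ j ih => rw [iterComp, Polynomial.natDegree_comp, ih, pow_succ]

lemma iterComp_ne_zero (hd : 2 ≤ f.natDegree) (i : ℕ) : iterComp f i ≠ 0 := by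
  intro hzero
  have h1 : (iterComp f i).natDegree = f.natDegree ^ i := natDegree_iterComp f i
  rw [hzero, Polynomial.natDegree_zero] at h1
  have h2 : 0 < f.natDegree ^ i := pow_pos (by omega) i
  omega

lemma Qpoly_ne_zero (hd : 2 ≤ f.natDegree) (A : Finset ℕ) (j : ℕ) : Qpoly f A j ≠ 0 := by
  induction j with
  | zero =>
    by_cases h0 : 0 ∈ A <;> simp [Qpoly, h0, Polynomial.X_ne_zero]
  | succ j ih =>
    rw [Qpoly]
    by_cases h0 : j+1 ∈ A <;> simp only [h0, if_true, if_false]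
    · exact mul_ne_zero (iterComp_ne_zero f hd _) ih
    · rwa [one_mul]

lemma natDegree_Qpoly (hd : 2 ≤ f.natDegree) (A : Finset ℕ) (j : ℕ) :
    (Qpoly f A j).natDegree =
      ∑ i ∈ Finset.range (j+1), (if i ∈ A then f.natDegree ^ i else 0) := by
  induction j with
  | zero =>
    by_cases h0 : 0 ∈ A <;> simp [Qpoly, h0]
  | succ j ih =>
    rw [Finset.sum_range_succ, ← ih, Qpoly]
    by_cases h0 : j+1 ∈ A <;> simp only [h0, if_true, if_false]
    · rw [Polynomial.natDegree_mul (iterComp_ne_zero f hd _) (Qpoly_ne_zero f hd A j),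
        natDegree_iterComp]
      omega
    · rw [one_mul]
      omega

end Lower

end QGHAProof
namespace QGHAProof

section Lower2

variable {F : Type*} [Field F] (q : F) (f g : F[X])

/-- Action on the vacuum vector, as a linear map. -/
noncomputable def actv : QGHA F q f g →ₗ[F] VMod F where
  toFun a := rho q f g a (Finsupp.single 0 1)
  map_add' a b := by simp only [map_add, LinearMap.add_apply]
  map_smul' c a := by simp only [map_smul, LinearMap.smul_apply, RingHom.id_apply]

lemma Sgen_fg : (Sgen q f g).FG := Submodule.fg_span (Set.toFinite _)

lemma lower_bound (hd : 2 ≤ f.natDegree) (k : ℕ) :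
    2 ^ (k+1) ≤ Module.finrank F ↥((Sgen q f g) ^ (2*k+1)) := by
  classical
  set n := 2*k+1 with hn
  set b : ((Finset.range (k+1)).powerset : Finset (Finset ℕ)) → VMod F :=
    fun A => Finsupp.single k (Qpoly f A.1 k) with hb_def
  have hp0 : ∀ A : ((Finset.range (k+1)).powerset : Finset (Finset ℕ)), Qpoly f A.1 k ≠ 0 :=
    fun A => Qpoly_ne_zero f hd _ _
  have hdeginj : Function.Injective
      fun A : ((Finset.range (k+1)).powerset : Finset (Finset ℕ)) =>
        (Qpoly f A.1 k).natDegree := by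
    intro A B hAB
    simp only [natDegree_Qpoly f hd] at hAB
    have hA : A.1 ⊆ Finset.range (k+1) := Finset.mem_powerset.1 A.2
    have hB : B.1 ⊆ Finset.range (k+1) := Finset.mem_powerset.1 B.2
    rw [Finset.sum_ite_mem, Finset.sum_ite_mem, Finset.inter_eq_right.2 hA,
      Finset.inter_eq_right.2 hB] at hAB
    exact Subtype.ext (sum_pow_injective (by omega) hAB)
  have hq : LinearIndependent F
      (fun A : ((Finset.range (k+1)).powerset : Finset (Finset ℕ)) => Qpoly f A.1 k) :=
    linearIndependent_of_natDegree_injective _ hp0 hdeginj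
  have hb : LinearIndependent F b :=
    hq.map' (Finsupp.lsingle k) (Finsupp.ker_lsingle k)
  have hcard : Fintype.card ((Finset.range (k+1)).powerset : Finset (Finset ℕ)) = 2^(k+1) := by
    rw [Fintype.card_coe, Finset.card_powerset, Finset.card_range]
  have h1 : Module.finrank F ↥(Submodule.span F (Set.range b)) = 2^(k+1) := by
    rw [finrank_span_eq_card hb, hcard]
  have hle : Submodule.span F (Set.range b) ≤
      Submodule.map (actv q f g) ((Sgen q f g) ^ n) := by
    rw [Submodule.span_le]
    rintro _ ⟨A, rfl⟩
    refine ⟨Wword q f g A.1 k, Wword_mem q f g A.1 k, ?_⟩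
    show rho q f g (Wword q f g A.1 k) (Finsupp.single 0 1) = b A
    rw [rho_Wword]
  haveI hSfin : Module.Finite F ↥((Sgen q f g) ^ n) :=
    Module.Finite.iff_fg.2 ((Sgen_fg q f g).pow n)
  haveI : Module.Finite F ↥(Submodule.map (actv q f g) ((Sgen q f g) ^ n)) :=
    Module.Finite.iff_fg.2 (((Sgen_fg q f g).pow n).map _)
  calc 2^(k+1) = Module.finrank F ↥(Submodule.span F (Set.range b)) := h1.symm
    _ ≤ Module.finrank F ↥(Submodule.map (actv q f g) ((Sgen q f g) ^ n)) :=
        Submodule.finrank_mono hle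
    _ ≤ Module.finrank F ↥((Sgen q f g) ^ n) := Submodule.finrank_map_le _ _

end Lower2

end QGHAProof
namespace QGHAProof

section Upper

variable {F : Type*} [Field F] (v : F[X]) (r s γ : F)

/-- Monomials `u^i h^j d^k` of a GDUA. -/
noncomputable def Mmono (i j k : ℕ) : GDUA F v r s γ :=
  uL v r s γ ^ i * hL v r s γ ^ j * dL v r s γ ^ k

/-- The generating subspace of `L(v,r,s,γ)`. -/
noncomputable def Tgen : Submodule F (GDUA F v r s γ) :=
  Submodule.span F {1, uL v r s γ, dL v r s γ, hL v r s γ}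

/-- The monomial filtration of a GDUA. -/
noncomputable def NN (n : ℕ) : Submodule F (GDUA F v r s γ) :=
  Submodule.span F {z | ∃ i j k, i + k ≤ n ∧ j ≤ (v.natDegree + 1) * n ∧ z = Mmono v r s γ i j k}

lemma h_upow (i : ℕ) : ∃ a b : F,
    hL v r s γ * uL v r s γ ^ i = uL v r s γ ^ i * (a • hL v r s γ + b • 1) := by
  induction i with
  | zero =>
    exact ⟨1, 0, by simp⟩
  | succ i ih =>
    obtain ⟨a, b, hab⟩ := ih
    refine ⟨r*a, r*b - γ, ?_⟩
    calc hL v r s γ * uL v r s γ ^ (i+1)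
        = (hL v r s γ * uL v r s γ) * uL v r s γ ^ i := by rw [pow_succ', mul_assoc]
      _ = (r • (uL v r s γ * hL v r s γ) - γ • uL v r s γ) * uL v r s γ ^ i := by
          rw [L_rel_hu]
      _ = r • (uL v r s γ * (hL v r s γ * uL v r s γ ^ i)) -
            γ • (uL v r s γ * uL v r s γ ^ i) := by
          rw [sub_mul, smul_mul_assoc, smul_mul_assoc, mul_assoc]
      _ = r • (uL v r s γ * (uL v r s γ ^ i * (a • hL v r s γ + b • 1))) -
            γ • (uL v r s γ * uL v r s γ ^ i) := by rw [hab]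
      _ = r • (a • ((uL v r s γ * uL v r s γ ^ i) * hL v r s γ) +
            b • (uL v r s γ * uL v r s γ ^ i)) - γ • (uL v r s γ * uL v r s γ ^ i) := by
          rw [← mul_assoc, mul_add, mul_smul_comm, mul_smul_comm, mul_one]
      _ = (uL v r s γ * uL v r s γ ^ i) * ((r*a) • hL v r s γ + (r*b - γ) • 1) := by
          rw [mul_add, mul_smul_comm, mul_smul_comm, mul_one]
          module
      _ = uL v r s γ ^ (i+1) * ((r*a) • hL v r s γ + (r*b - γ) • 1) := by rw [← pow_succ']

lemma aeval_mul_upow (i : ℕ) (P : F[X]) : ∃ Q : F[X], Q.natDegree ≤ P.natDegree ∧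
    aeval (hL v r s γ) P * uL v r s γ ^ i = uL v r s γ ^ i * aeval (hL v r s γ) Q := by
  obtain ⟨a, b, hab⟩ := h_upow v r s γ i
  refine ⟨P.comp (C a * X + C b), ?_, ?_⟩
  · exact le_trans (Polynomial.natDegree_comp_le) (by
      have := Polynomial.natDegree_linear_le (a := a) (b := b)
      nlinarith [P.natDegree.zero_le])
  · rw [Polynomial.aeval_comp]
    have hlin : aeval (hL v r s γ) (C a * X + C b : F[X]) = a • hL v r s γ + b • 1 :=
      aeval_linear _ a b
    rw [hlin]
    induction P using Polynomial.induction_on with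
    | C c => rw [aeval_C, aeval_C]; exact Algebra.commutes c _
    | add P1 P2 h1 h2 => rw [map_add, map_add, add_mul, mul_add, h1, h2]
    | monomial n c ihp =>
      have hrw : (C c * X ^ (n + 1) : F[X]) = (C c * X ^ n) * X := by ring
      rw [hrw, map_mul (aeval (hL v r s γ)) (C c * X ^ n) X,
        map_mul (aeval (a • hL v r s γ + b • 1)) (C c * X ^ n) X, aeval_X, aeval_X]
      calc (aeval (hL v r s γ) (C c * X ^ n) * hL v r s γ) * uL v r s γ ^ i
          = aeval (hL v r s γ) (C c * X ^ n) * (hL v r s γ * uL v r s γ ^ i) := by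
            rw [mul_assoc]
        _ = aeval (hL v r s γ) (C c * X ^ n) * (uL v r s γ ^ i * (a • hL v r s γ + b • 1)) := by
            rw [hab]
        _ = (aeval (hL v r s γ) (C c * X ^ n) * uL v r s γ ^ i) * (a • hL v r s γ + b • 1) := by
            rw [mul_assoc]
        _ = (uL v r s γ ^ i * aeval (a • hL v r s γ + b • 1) (C c * X ^ n)) *
              (a • hL v r s γ + b • 1) := by rw [ihp]
        _ = uL v r s γ ^ i * (aeval (a • hL v r s γ + b • 1) (C c * X ^ n) *
              (a • hL v r s γ + b • 1)) := by rw [mul_assoc]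

lemma d_hpow (j : ℕ) : ∃ R : F[X], R.natDegree ≤ j ∧
    dL v r s γ * hL v r s γ ^ j = aeval (hL v r s γ) R * dL v r s γ := by
  induction j with
  | zero => exact ⟨1, by simp, by simp⟩
  | succ j ih =>
    obtain ⟨R, hRdeg, hRe⟩ := ih
    refine ⟨r • (R * X) - γ • R, ?_, ?_⟩
    · refine le_trans (Polynomial.natDegree_sub_le _ _) (max_le ?_ ?_)
      · refine le_trans (Polynomial.natDegree_smul_le _ _) ?_
        refine le_trans (Polynomial.natDegree_mul_le) ?_
        have := Polynomial.natDegree_X_le (R := F)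
        omega
      · exact le_trans (Polynomial.natDegree_smul_le _ _) (by omega)
    · calc dL v r s γ * hL v r s γ ^ (j+1)
          = (dL v r s γ * hL v r s γ ^ j) * hL v r s γ := by rw [pow_succ, mul_assoc]
        _ = aeval (hL v r s γ) R * (dL v r s γ * hL v r s γ) := by rw [hRe, mul_assoc]
        _ = aeval (hL v r s γ) R *
              (r • (hL v r s γ * dL v r s γ) - γ • dL v r s γ) := by rw [L_rel_dh]
        _ = r • ((aeval (hL v r s γ) R * hL v r s γ) * dL v r s γ) -
              γ • (aeval (hL v r s γ) R * dL v r s γ) := by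
            rw [mul_sub, mul_smul_comm, mul_smul_comm, mul_assoc]
        _ = aeval (hL v r s γ) (r • (R * X) - γ • R) * dL v r s γ := by
            rw [map_sub, map_smul, map_smul, map_mul, aeval_X, sub_mul, smul_mul_assoc,
              smul_mul_assoc]

lemma d_upow (i : ℕ) : dL v r s γ * uL v r s γ ^ i =
    s ^ i • (uL v r s γ ^ i * dL v r s γ) -
      ∑ l ∈ Finset.range i,
        s ^ l • (uL v r s γ ^ l * (aeval (hL v r s γ) v * uL v r s γ ^ (i-1-l))) := by
  induction i with
  | zero => simp
  | succ i ih =>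
    calc dL v r s γ * uL v r s γ ^ (i+1)
        = (dL v r s γ * uL v r s γ) * uL v r s γ ^ i := by rw [pow_succ', mul_assoc]
      _ = s • (uL v r s γ * (dL v r s γ * uL v r s γ ^ i)) -
            aeval (hL v r s γ) v * uL v r s γ ^ i := by
          rw [L_rel_du, sub_mul, smul_mul_assoc, mul_assoc]
      _ = s • (uL v r s γ * (s ^ i • (uL v r s γ ^ i * dL v r s γ) -
            ∑ l ∈ Finset.range i, s ^ l •
              (uL v r s γ ^ l * (aeval (hL v r s γ) v * uL v r s γ ^ (i-1-l))))) -
            aeval (hL v r s γ) v * uL v r s γ ^ i := by rw [ih]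
      _ = s ^ (i+1) • (uL v r s γ ^ (i+1) * dL v r s γ) -
            ((∑ l ∈ Finset.range i, s ^ (l+1) •
              (uL v r s γ ^ (l+1) * (aeval (hL v r s γ) v * uL v r s γ ^ (i-1-l)))) +
             aeval (hL v r s γ) v * uL v r s γ ^ i) := by
          rw [mul_sub, Finset.mul_sum, smul_sub, Finset.smul_sum]
          rw [sub_sub]
          congr 1
          · rw [mul_smul_comm, smul_smul, ← mul_assoc, ← pow_succ', ← pow_succ']
          · congr 1
            apply Finset.sum_congr rfl
            intro l hl
            rw [mul_smul_comm, smul_smul, ← mul_assoc, ← pow_succ', ← pow_succ']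
      _ = s ^ (i+1) • (uL v r s γ ^ (i+1) * dL v r s γ) -
            ∑ l ∈ Finset.range (i+1), s ^ l •
              (uL v r s γ ^ l * (aeval (hL v r s γ) v * uL v r s γ ^ (i-l))) := by
          congr 1
          rw [Finset.sum_range_succ']
          congr 1
          · apply Finset.sum_congr rfl
            intro l hl
            have : i - (l+1) = i - 1 - l := by omega
            rw [this]
          · simp

end Upper

end QGHAProof
namespace QGHAProof

section Upper2

variable {F : Type*} [Field F] (v : F[X]) (r s γ : F)

noncomputable local instance gduaDecEq : DecidableEq (GDUA F v r s γ) := Classical.decEq _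

lemma mono_mem (n i k : ℕ) (R : F[X]) (hik : i + k ≤ n)
    (hdeg : R.natDegree ≤ (v.natDegree + 1) * n) :
    uL v r s γ ^ i * (aeval (hL v r s γ) R * dL v r s γ ^ k) ∈ NN v r s γ n := by
  rw [Polynomial.aeval_eq_sum_range, Finset.sum_mul, Finset.mul_sum]
  apply Submodule.sum_mem
  intro j hj
  rw [smul_mul_assoc, mul_smul_comm]
  apply Submodule.smul_mem
  apply Submodule.subset_span
  have hjle : j ≤ (v.natDegree + 1) * n := by
    have := Finset.mem_range.1 hj
    omega
  exact ⟨i, j, k, hik, hjle, by rw [Mmono, mul_assoc]⟩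

lemma Kmono {n j : ℕ} (hj : j ≤ (v.natDegree + 1) * n) : j ≤ (v.natDegree + 1) * (n+1) := by
  have h2 : (v.natDegree + 1) * (n+1) = (v.natDegree + 1) * n + (v.natDegree + 1) := by ring
  omega

lemma mem_NN_succ_one (n i j k : ℕ) (hik : i + k ≤ n) (hj : j ≤ (v.natDegree + 1) * n) :
    Mmono v r s γ i j k ∈ NN v r s γ (n+1) :=
  Submodule.subset_span ⟨i, j, k, by omega, Kmono v hj, rfl⟩

lemma mem_NN_succ_u (n i j k : ℕ) (hik : i + k ≤ n) (hj : j ≤ (v.natDegree + 1) * n) :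
    uL v r s γ * Mmono v r s γ i j k ∈ NN v r s γ (n+1) := by
  have key : uL v r s γ * Mmono v r s γ i j k = Mmono v r s γ (i+1) j k := by
    rw [Mmono, Mmono, ← mul_assoc, ← mul_assoc, ← pow_succ']
  rw [key]
  exact Submodule.subset_span ⟨i+1, j, k, by omega, Kmono v hj, rfl⟩

lemma mem_NN_succ_h (n i j k : ℕ) (hik : i + k ≤ n) (hj : j ≤ (v.natDegree + 1) * n) :
    hL v r s γ * Mmono v r s γ i j k ∈ NN v r s γ (n+1) := by
  obtain ⟨a, b, hab⟩ := h_upow v r s γ i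
  have key : hL v r s γ * Mmono v r s γ i j k =
      a • Mmono v r s γ i (j+1) k + b • Mmono v r s γ i j k := by
    calc hL v r s γ * Mmono v r s γ i j k
        = (hL v r s γ * uL v r s γ ^ i) * (hL v r s γ ^ j * dL v r s γ ^ k) := by
          rw [Mmono, mul_assoc, ← mul_assoc]
      _ = uL v r s γ ^ i * (((a • hL v r s γ + b • 1) * hL v r s γ ^ j) * dL v r s γ ^ k) := by
          rw [hab, mul_assoc, mul_assoc]
      _ = uL v r s γ ^ i * ((a • hL v r s γ ^ (j+1) + b • hL v r s γ ^ j) * dL v r s γ ^ k) := by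
          rw [add_mul, smul_mul_assoc, smul_mul_assoc, one_mul, ← pow_succ']
      _ = a • Mmono v r s γ i (j+1) k + b • Mmono v r s γ i j k := by
          rw [Mmono, Mmono, add_mul, smul_mul_assoc, smul_mul_assoc, mul_add, mul_smul_comm,
            mul_smul_comm, mul_assoc, mul_assoc]
  rw [key]
  refine Submodule.add_mem _ (Submodule.smul_mem _ _ ?_) (Submodule.smul_mem _ _ ?_)
  · apply Submodule.subset_span
    refine ⟨i, j+1, k, by omega, ?_, rfl⟩
    have h2 : (v.natDegree + 1) * (n+1) = (v.natDegree + 1) * n + (v.natDegree + 1) := by ring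
    omega
  · exact Submodule.subset_span ⟨i, j, k, by omega, Kmono v hj, rfl⟩

lemma mem_NN_succ_d (n i j k : ℕ) (hik : i + k ≤ n) (hj : j ≤ (v.natDegree + 1) * n) :
    dL v r s γ * Mmono v r s γ i j k ∈ NN v r s γ (n+1) := by
  obtain ⟨R, hRdeg, hRe⟩ := d_hpow v r s γ j
  have key : dL v r s γ * Mmono v r s γ i j k =
      s ^ i • (uL v r s γ ^ i * (aeval (hL v r s γ) R * dL v r s γ ^ (k+1))) -
      ∑ l ∈ Finset.range i, s ^ l •
        ((uL v r s γ ^ l * (aeval (hL v r s γ) v * uL v r s γ ^ (i-1-l))) *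
          (hL v r s γ ^ j * dL v r s γ ^ k)) := by
    have hmain : (uL v r s γ ^ i * dL v r s γ) * (hL v r s γ ^ j * dL v r s γ ^ k) =
        uL v r s γ ^ i * (aeval (hL v r s γ) R * dL v r s γ ^ (k+1)) := by
      rw [mul_assoc, ← mul_assoc (dL v r s γ), hRe, mul_assoc, ← pow_succ']
    calc dL v r s γ * Mmono v r s γ i j k
        = (dL v r s γ * uL v r s γ ^ i) * (hL v r s γ ^ j * dL v r s γ ^ k) := by
          rw [Mmono, mul_assoc, ← mul_assoc]
      _ = (s ^ i • (uL v r s γ ^ i * dL v r s γ) -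
            ∑ l ∈ Finset.range i, s ^ l •
              (uL v r s γ ^ l * (aeval (hL v r s γ) v * uL v r s γ ^ (i-1-l)))) *
            (hL v r s γ ^ j * dL v r s γ ^ k) := by rw [d_upow]
      _ = s ^ i • ((uL v r s γ ^ i * dL v r s γ) * (hL v r s γ ^ j * dL v r s γ ^ k)) -
            ∑ l ∈ Finset.range i, s ^ l •
              ((uL v r s γ ^ l * (aeval (hL v r s γ) v * uL v r s γ ^ (i-1-l))) *
                (hL v r s γ ^ j * dL v r s γ ^ k)) := by
          rw [sub_mul, smul_mul_assoc, Finset.sum_mul]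
          simp only [smul_mul_assoc]
      _ = _ := by rw [hmain]
  rw [key]
  apply Submodule.sub_mem
  · apply Submodule.smul_mem
    apply mono_mem
    · omega
    · exact le_trans hRdeg (le_trans hj (Kmono v (le_refl _)))
  · apply Submodule.sum_mem
    intro l hl
    apply Submodule.smul_mem
    obtain ⟨Q, hQdeg, hQe⟩ := aeval_mul_upow v r s γ (i-1-l) v
    have heq : (uL v r s γ ^ l * (aeval (hL v r s γ) v * uL v r s γ ^ (i-1-l))) *
        (hL v r s γ ^ j * dL v r s γ ^ k) =
        uL v r s γ ^ (l+(i-1-l)) * (aeval (hL v r s γ) (Q * X ^ j) * dL v r s γ ^ k) := by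
      rw [hQe, map_mul, Polynomial.aeval_X_pow, ← mul_assoc, ← mul_assoc, ← pow_add,
        mul_assoc, mul_assoc, mul_assoc]
    rw [heq]
    apply mono_mem
    · have hli : l < i := Finset.mem_range.1 hl
      omega
    · refine le_trans Polynomial.natDegree_mul_le ?_
      rw [Polynomial.natDegree_X_pow]
      have h2 : (v.natDegree + 1) * (n+1) = (v.natDegree + 1) * n + (v.natDegree + 1) := by ring
      omega

lemma Tgen_mul_NN (n : ℕ) : Tgen v r s γ * NN v r s γ n ≤ NN v r s γ (n+1) := by
  rw [Submodule.mul_le]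
  intro x hx
  induction hx using Submodule.span_induction with
  | mem t ht =>
    intro y hy
    have hyle : NN v r s γ n ≤ Submodule.comap (LinearMap.mulLeft F t) (NN v r s γ (n+1)) := by
      rw [NN, Submodule.span_le]
      rintro _ ⟨i, j, k, hik, hj, rfl⟩
      show t * Mmono v r s γ i j k ∈ NN v r s γ (n+1)
      rcases ht with h1 | h1 | h1 | h1
      · rw [h1, one_mul]; exact mem_NN_succ_one v r s γ n i j k hik hj
      · rw [h1]; exact mem_NN_succ_u v r s γ n i j k hik hj
      · rw [h1]; exact mem_NN_succ_d v r s γ n i j k hik hj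
      · rw [Set.mem_singleton_iff.1 h1]; exact mem_NN_succ_h v r s γ n i j k hik hj
    exact hyle hy
  | zero => intro y hy; rw [zero_mul]; exact Submodule.zero_mem _
  | add x1 x2 hx1 hx2 ih1 ih2 =>
    intro y hy
    rw [add_mul]
    exact Submodule.add_mem _ (ih1 y hy) (ih2 y hy)
  | smul c x1 hx1 ih =>
    intro y hy
    rw [smul_mul_assoc]
    exact Submodule.smul_mem _ _ (ih y hy)

lemma Tgen_pow_le (n : ℕ) : Tgen v r s γ ^ n ≤ NN v r s γ n := by
  induction n with
  | zero =>
    rw [pow_zero]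
    rw [Submodule.one_eq_span, Submodule.span_le]
    rintro _ rfl
    exact Submodule.subset_span ⟨0, 0, 0, by omega, by omega, by simp [Mmono]⟩
  | succ n ih =>
    rw [pow_succ']
    exact le_trans (mul_le_mul' (le_refl _) ih) (Tgen_mul_NN v r s γ n)

/-- The finite monomial set spanning `NN n`. -/
noncomputable def Fmon (n : ℕ) : Finset (GDUA F v r s γ) :=
  ((Finset.range (n+1)) ×ˢ (Finset.range ((v.natDegree + 1) * n + 1)) ×ˢ
    (Finset.range (n+1))).image (fun t => Mmono v r s γ t.1 t.2.1 t.2.2)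

lemma NN_le_span_Fmon (n : ℕ) : NN v r s γ n ≤ Submodule.span F ↑(Fmon v r s γ n) := by
  rw [NN, Submodule.span_le]
  rintro _ ⟨i, j, k, hik, hj, rfl⟩
  apply Submodule.subset_span
  rw [Fmon, Finset.coe_image]
  refine ⟨(i, j, k), ?_, rfl⟩
  simp only [Finset.mem_coe, Finset.mem_product, Finset.mem_range]
  omega

lemma finrank_NN_le (n : ℕ) :
    Module.finrank F ↥(Submodule.span F ((Fmon v r s γ n : Set (GDUA F v r s γ)))) ≤
      (n+1) * (((v.natDegree + 1) * n + 1) * (n+1)) := by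
  refine le_trans (finrank_span_finset_le_card (Fmon v r s γ n)) ?_
  rw [Fmon]
  refine le_trans (Finset.card_image_le) ?_
  simp [Finset.card_product]

lemma exists_mem_Tpow (z : GDUA F v r s γ) : ∃ n, z ∈ Tgen v r s γ ^ n := by
  obtain ⟨w, rfl⟩ := RingQuot.mkAlgHom_surjective F (GDUARel F v r s γ) z
  induction w with
  | grade0 c =>
    refine ⟨0, ?_⟩
    rw [pow_zero, AlgHom.commutes]
    exact Submodule.algebraMap_mem c
  | grade1 t =>
    refine ⟨1, ?_⟩
    rw [pow_one]
    apply Submodule.subset_span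
    cases t
    · right; right; left; rfl
    · right; left; rfl
    · right; right; right; rfl
  | mul a b iha ihb =>
    obtain ⟨n1, h1⟩ := iha
    obtain ⟨n2, h2⟩ := ihb
    refine ⟨n1 + n2, ?_⟩
    rw [map_mul, pow_add]
    exact Submodule.mul_mem_mul h1 h2
  | add a b iha ihb =>
    obtain ⟨n1, h1⟩ := iha
    obtain ⟨n2, h2⟩ := ihb
    refine ⟨n1 + n2, ?_⟩
    rw [map_add]
    have hmono : ∀ m m' : ℕ, m ≤ m' → Tgen v r s γ ^ m ≤ Tgen v r s γ ^ m' := by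
      intro m m' hmm
      obtain ⟨c, rfl⟩ := Nat.exists_eq_add_of_le hmm
      induction c with
      | zero => rw [Nat.add_zero]
      | succ c ihc =>
        intro x hxx
        have hx1 : x * 1 ∈ Tgen v r s γ ^ (m + c) * Tgen v r s γ :=
          Submodule.mul_mem_mul (ihc (by omega) hxx)
            (Submodule.subset_span (by left; rfl))
        rw [mul_one] at hx1
        rw [show m + (c+1) = (m+c)+1 by omega, pow_succ]
        exact hx1
    exact Submodule.add_mem _ (hmono n1 (n1+n2) (by omega) h1)
      (hmono n2 (n1+n2) (by omega) h2)

end Upper2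

end QGHAProof
namespace QGHAProof

section Glue

variable {F : Type*} [Field F] (v : F[X]) (r s γ : F)

lemma Tgen_pow_mono' (m c : ℕ) : Tgen v r s γ ^ m ≤ Tgen v r s γ ^ (m + c) := by
  induction c with
  | zero => rw [Nat.add_zero]
  | succ c ihc =>
    intro x hxx
    have hx1 : x * 1 ∈ Tgen v r s γ ^ (m + c) * Tgen v r s γ :=
      Submodule.mul_mem_mul (ihc hxx) (Submodule.subset_span (by left; rfl))
    rw [mul_one] at hx1
    rw [show m + (c+1) = (m+c)+1 by omega, pow_succ]
    exact hx1

lemma Tgen_pow_mono {m m' : ℕ} (hmm : m ≤ m') : Tgen v r s γ ^ m ≤ Tgen v r s γ ^ m' := by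
  obtain ⟨c, rfl⟩ := Nat.exists_eq_add_of_le hmm
  exact Tgen_pow_mono' v r s γ m c

lemma Spow_mono {A : Type*} [Ring A] [Algebra F A] {M N : Submodule F A} (h : M ≤ N) (n : ℕ) :
    M ^ n ≤ N ^ n := by
  induction n with
  | zero => rw [pow_zero, pow_zero]
  | succ n ih => rw [pow_succ, pow_succ]; exact mul_le_mul' ih h

/-- The hard direction. -/
lemma hard_direction {q : F} {f g : F[X]}
    (φ : QGHA F q f g ≃ₐ[F] GDUA F v r s γ) : f.degree ≤ 1 := by
  by_contra hdeg
  have hd : 2 ≤ f.natDegree := by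
    by_contra hnd
    push_neg at hnd
    have h1 : f.natDegree ≤ 1 := Nat.lt_succ_iff.mp hnd
    have h2 : f.degree ≤ (1 : ℕ) := Polynomial.natDegree_le_iff_degree_le.mp h1
    exact hdeg (by exact_mod_cast h2)
  set ψ : QGHA F q f g →ₐ[F] GDUA F v r s γ := φ.toAlgHom with hψ
  have hinj : Function.Injective ψ := φ.injective
  obtain ⟨m1, hm1⟩ := exists_mem_Tpow v r s γ (ψ 1)
  obtain ⟨m2, hm2⟩ := exists_mem_Tpow v r s γ (ψ (QGHA.x q f g))
  obtain ⟨m3, hm3⟩ := exists_mem_Tpow v r s γ (ψ (QGHA.y q f g))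
  obtain ⟨m4, hm4⟩ := exists_mem_Tpow v r s γ (ψ (QGHA.h q f g))
  set m := max (max m1 m2) (max m3 m4) with hm
  have hmapS : Submodule.map ψ.toLinearMap (Sgen q f g) ≤ Tgen v r s γ ^ m := by
    rw [Sgen, Submodule.map_span, Submodule.span_le]
    rintro _ ⟨e, he, rfl⟩
    simp only [Set.mem_insert_iff, Set.mem_singleton_iff] at he
    rcases he with rfl | rfl | rfl | rfl
    · exact Tgen_pow_mono v r s γ (le_trans (le_max_left m1 m2) (le_max_left _ _)) hm1
    · exact Tgen_pow_mono v r s γ (le_trans (le_max_right m1 m2) (le_max_left _ _)) hm2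
    · exact Tgen_pow_mono v r s γ (le_trans (le_max_left m3 m4) (le_max_right _ _)) hm3
    · exact Tgen_pow_mono v r s γ (le_trans (le_max_right m3 m4) (le_max_right _ _)) hm4
  have key : ∀ k : ℕ, 2^(k+1) ≤ (v.natDegree + 1) * (2*m+1)^3 * (k+1)^3 := by
    intro k
    set n := 2*k+1 with hn
    have hSfg : ((Sgen q f g) ^ n).FG := (Sgen_fg q f g).pow n
    haveI : Module.Finite F ↥((Sgen q f g) ^ n) := Module.Finite.iff_fg.2 hSfg
    haveI : Module.Finite F
        ↥(Submodule.span F ((Fmon v r s γ (m*n) : Set (GDUA F v r s γ)))) :=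
      Module.Finite.iff_fg.2 (Submodule.fg_span (Finset.finite_toSet _))
    have h3 : Submodule.map ψ.toLinearMap ((Sgen q f g) ^ n) ≤
        Submodule.span F ((Fmon v r s γ (m*n) : Set (GDUA F v r s γ))) := by
      calc Submodule.map ψ.toLinearMap ((Sgen q f g) ^ n)
          = (Submodule.map ψ.toLinearMap (Sgen q f g)) ^ n := Submodule.map_pow _ ψ n
        _ ≤ (Tgen v r s γ ^ m) ^ n := Spow_mono hmapS n
        _ = Tgen v r s γ ^ (m * n) := by rw [← pow_mul]
        _ ≤ NN v r s γ (m*n) := Tgen_pow_le v r s γ (m*n)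
        _ ≤ _ := NN_le_span_Fmon v r s γ (m*n)
    have harith : (m*n+1) * (((v.natDegree + 1) * (m*n) + 1) * (m*n+1)) ≤
        (v.natDegree + 1) * (2*m+1)^3 * (k+1)^3 := by
      have e1 : m*n+1 ≤ (2*m+1)*(k+1) := by rw [hn]; nlinarith
      have e2 : (v.natDegree + 1) * (m*n) + 1 ≤ (v.natDegree + 1) * ((2*m+1)*(k+1)) := by
        have e2a : (v.natDegree + 1) * (m*n) + 1 ≤ (v.natDegree + 1) * (m*n+1) := by
          nlinarith [Nat.zero_le v.natDegree]
        exact le_trans e2a (Nat.mul_le_mul_left _ e1)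
      calc (m*n+1) * (((v.natDegree + 1) * (m*n) + 1) * (m*n+1))
          ≤ ((2*m+1)*(k+1)) * (((v.natDegree + 1) * ((2*m+1)*(k+1))) * ((2*m+1)*(k+1))) :=
            Nat.mul_le_mul e1 (Nat.mul_le_mul e2 e1)
        _ = (v.natDegree + 1) * (2*m+1)^3 * (k+1)^3 := by ring
    calc 2^(k+1) ≤ Module.finrank F ↥((Sgen q f g) ^ n) := lower_bound q f g hd k
      _ = Module.finrank F ↥(Submodule.map ψ.toLinearMap ((Sgen q f g) ^ n)) :=
          LinearEquiv.finrank_eq (Submodule.equivMapOfInjective ψ.toLinearMap hinj _)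
      _ ≤ Module.finrank F
            ↥(Submodule.span F ((Fmon v r s γ (m*n) : Set (GDUA F v r s γ)))) :=
          Submodule.finrank_mono h3
      _ ≤ (m*n+1) * (((v.natDegree + 1) * (m*n) + 1) * (m*n+1)) := finrank_NN_le v r s γ (m*n)
      _ ≤ (v.natDegree + 1) * (2*m+1)^3 * (k+1)^3 := harith
  obtain ⟨k, hk⟩ := exists_pow_lt_two_pow ((v.natDegree + 1) * (2*m+1)^3)
  have := key k
  omega

end Glue

end QGHAProof

/-- `H_q(f,g)` is isomorphic as an `F`-algebra to some generalized
down-up algebra `L(v,r,s,γ)` if and only if `deg f ≤ 1`. -/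
theorem qgha_iso_gdua_iff {F : Type*} [Field F] (q : F) (f g : F[X]) :
    (∃ (v : F[X]) (r s γ : F), Nonempty (QGHA F q f g ≃ₐ[F] GDUA F v r s γ)) ↔
      f.degree ≤ 1 := by
  constructor
  · rintro ⟨v, r, s, γ, ⟨φ⟩⟩
    exact QGHAProof.hard_direction v r s γ φ
  · exact QGHAProof.easy_direction q f g
end

section
/- Let F be a field, q ∈ F, f, g ∈ F[h] and λ ∈ F with λ ≠ 0. Then there is an F-algebra isomorphism H_q(f,g) ≅ H_q(λ f(λ^{-1}h), g(λ^{-1}h)) sending x ↦ x, y ↦ y and h ↦ λ^{-1}h. -/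
open Polynomial

/-! Rescaling `h` by `λ⁻¹` turns the relations of `H_q(λ f(λ⁻¹h), g(λ⁻¹h))` into those of
`H_q(f,g)`, and rescaling by `λ` turns them back. By the universal property of the two
presentations this gives algebra maps in both directions, and they are mutually inverse because
they are so on the generators. -/

section Rescaling

variable {R : Type*} [CommSemiring R] {A : Type*} [Semiring A] [Algebra R A]

theorem Polynomial.aeval_comp_C_mul_X (mu : R) (g : R[X]) (a : A) :
    aeval a (g.comp (C mu * X)) = aeval (mu • a) g := by
  rw [aeval_comp, map_mul, aeval_C, aeval_X, Algebra.smul_def]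

theorem Polynomial.aeval_C_mul_comp_C_mul_X (lam mu : R) (f : R[X]) (a : A) :
    aeval a (C lam * f.comp (C mu * X)) = lam • aeval (mu • a) f := by
  rw [map_mul, aeval_C, aeval_comp_C_mul_X, ← Algebra.smul_def]

end Rescaling

namespace QGHA

variable {F : Type*} [Field F] {A : Type*} [Semiring A] [Algebra F A]

structure IsRelTriple (q : F) (f g : F[X]) (a b c : A) : Prop where
  hx : c * a = a * aeval c f
  yh : b * c = aeval c f * b
  yx : b * a = q • (a * b) + aeval c g

/-- `RingQuot.mkAlgHom` with codomain `QGHA F q f g`: with `RingQuot` as codomain, `simp` would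
work in the instances of `RingQuot` and its results would not typecheck against `QGHA`. -/
noncomputable def mk (q : F) (f g : F[X]) : FreeAlgebra F QGHAGen →ₐ[F] QGHA F q f g :=
  RingQuot.mkAlgHom F (QGHARel F q f g)

variable {q : F} {f g : F[X]}

theorem mk_rel {u v : FreeAlgebra F QGHAGen} (r : QGHARel F q f g u v) :
    mk q f g u = mk q f g v :=
  RingQuot.mkAlgHom_rel F r

theorem mk_ι_x : mk q f g (FreeAlgebra.ι F .x) = x q f g := rfl

theorem mk_ι_y : mk q f g (FreeAlgebra.ι F .y) = y q f g := rfl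

theorem mk_ι_h : mk q f g (FreeAlgebra.ι F .h) = h q f g := rfl

theorem isRelTriple_generators : IsRelTriple q f g (x q f g) (y q f g) (h q f g) := by
  constructor
  · simpa only [mk_ι_x, mk_ι_h, map_mul, ← aeval_algHom_apply] using
      mk_rel (QGHARel.hx (q := q) (g := g))
  · simpa only [mk_ι_y, mk_ι_h, map_mul, ← aeval_algHom_apply] using
      mk_rel (QGHARel.yh (q := q) (g := g))
  · simpa only [mk_ι_x, mk_ι_y, mk_ι_h, map_mul, map_add, map_smul, ← aeval_algHom_apply] using
      mk_rel (QGHARel.yx (q := q) (f := f))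

def genMap (a b c : A) : QGHAGen → A
  | .x => a
  | .y => b
  | .h => c

variable {a b c : A}

noncomputable def lift (hr : IsRelTriple q f g a b c) : QGHA F q f g →ₐ[F] A :=
  RingQuot.liftAlgHom F ⟨FreeAlgebra.lift F (genMap a b c), by
    rintro u v ⟨⟩ <;>
      simp only [map_mul, map_add, map_smul, FreeAlgebra.lift_ι_apply, genMap,
        ← aeval_algHom_apply]
    exacts [hr.hx, hr.yh, hr.yx]⟩

section lift

variable (hr : IsRelTriple q f g a b c)

@[simp] theorem lift_x : lift hr (x q f g) = a :=
  (RingQuot.liftAlgHom_mkAlgHom_apply F _ _ _).trans (FreeAlgebra.lift_ι_apply _ _)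

@[simp] theorem lift_y : lift hr (y q f g) = b :=
  (RingQuot.liftAlgHom_mkAlgHom_apply F _ _ _).trans (FreeAlgebra.lift_ι_apply _ _)

@[simp] theorem lift_h : lift hr (h q f g) = c :=
  (RingQuot.liftAlgHom_mkAlgHom_apply F _ _ _).trans (FreeAlgebra.lift_ι_apply _ _)

end lift

theorem algHom_ext {φ ψ : QGHA F q f g →ₐ[F] A} (hx : φ (x q f g) = ψ (x q f g))
    (hy : φ (y q f g) = ψ (y q f g)) (hh : φ (h q f g) = ψ (h q f g)) : φ = ψ := by
  refine RingQuot.ringQuot_ext' (S := F) (s := QGHARel F q f g) φ ψ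
    (FreeAlgebra.hom_ext (funext fun t => ?_))
  cases t
  exacts [hx, hy, hh]

variable {lam : F}

theorem IsRelTriple.smul (hlam : lam ≠ 0) (hr : IsRelTriple q f g a b c) :
    IsRelTriple q (C lam * f.comp (C lam⁻¹ * X)) (g.comp (C lam⁻¹ * X)) a b (lam • c) := by
  refine ⟨?_, ?_, ?_⟩ <;> simp only [aeval_C_mul_comp_C_mul_X, aeval_comp_C_mul_X,
    smul_smul, inv_mul_cancel₀ hlam, one_smul]
  · rw [smul_mul_assoc, hr.hx, mul_smul_comm]
  · rw [mul_smul_comm, hr.yh, smul_mul_assoc]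
  · exact hr.yx

theorem IsRelTriple.inv_smul (hlam : lam ≠ 0)
    (hr : IsRelTriple q (C lam * f.comp (C lam⁻¹ * X)) (g.comp (C lam⁻¹ * X)) a b c) :
    IsRelTriple q f g a b (lam⁻¹ • c) := by
  have hx := hr.hx
  have yh := hr.yh
  have yx := hr.yx
  simp only [aeval_C_mul_comp_C_mul_X, aeval_comp_C_mul_X] at hx yh yx
  refine ⟨?_, ?_, yx⟩
  · rw [smul_mul_assoc, hx, mul_smul_comm, smul_smul, inv_mul_cancel₀ hlam, one_smul]
  · rw [mul_smul_comm, yh, smul_mul_assoc, smul_smul, inv_mul_cancel₀ hlam, one_smul]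

variable (q f g) in
noncomputable def scaleEquiv (hlam : lam ≠ 0) :
    QGHA F q f g ≃ₐ[F] QGHA F q (C lam * f.comp (C lam⁻¹ * X)) (g.comp (C lam⁻¹ * X)) :=
  AlgEquiv.ofAlgHom (lift (isRelTriple_generators.inv_smul hlam))
    (lift (isRelTriple_generators.smul hlam))
    (algHom_ext (by simp) (by simp)
      (by simp [smul_smul, mul_inv_cancel₀ hlam]))
    (algHom_ext (by simp) (by simp)
      (by simp [smul_smul, inv_mul_cancel₀ hlam]))

end QGHA

/-- For `λ ∈ F*` there is an `F`-algebra isomorphism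
`H_q(f,g) ≅ H_q(λ f(λ⁻¹h), g(λ⁻¹h))` sending `x ↦ x`, `y ↦ y` and `h ↦ λ⁻¹h`. -/
theorem qgha_iso_scale_h {F : Type*} [Field F] (q : F) (f g : F[X]) (lam : F)
    (hlam : lam ≠ 0) :
    ∃ φ : QGHA F q f g ≃ₐ[F]
        QGHA F q (C lam * f.comp (C lam⁻¹ * X)) (g.comp (C lam⁻¹ * X)),
      φ (QGHA.x q f g) = QGHA.x q (C lam * f.comp (C lam⁻¹ * X)) (g.comp (C lam⁻¹ * X)) ∧
      φ (QGHA.y q f g) = QGHA.y q (C lam * f.comp (C lam⁻¹ * X)) (g.comp (C lam⁻¹ * X)) ∧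
      φ (QGHA.h q f g) =
        lam⁻¹ • QGHA.h q (C lam * f.comp (C lam⁻¹ * X)) (g.comp (C lam⁻¹ * X)) :=
  ⟨QGHA.scaleEquiv q f g hlam, QGHA.lift_x _, QGHA.lift_y _, QGHA.lift_h _⟩
end
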